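/- arXiv:1109.0399 — 4 statements merged into one kernel-verified Lean document; each statement's English description precedes it below -/
import Mathlib

section
/- Let n = 3. For both 3-cycles w = (123) and w = (132) in S_3, the tangent cone C_w of the Schubert variety of w at the origin equals {x ∈ n_- : x_{31} = 0}. -/
open Matrix MvPolynomial

/-- Evaluation of a polynomial in the matrix-entry variables at a matrix. -/
noncomputable def evalMat {K : Type} [Field K] {n : ℕ}
    (m : Matrix (Fin n) (Fin n) K) (f : MvPolynomial (Fin n × Fin n) K) : K :=
  MvPolynomial.eval (fun p => m p.1 p.2) f

/-- Zariski closure of a set of matrices: the zero locus of its vanishing ideal. -/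
def zClosure {K : Type} [Field K] {n : ℕ} (S : Set (Matrix (Fin n) (Fin n) K)) :
    Set (Matrix (Fin n) (Fin n) K) :=
  {m | ∀ f : MvPolynomial (Fin n × Fin n) K,
      (∀ s ∈ S, evalMat s f = 0) → evalMat m f = 0}

/-- The group `B` of invertible upper triangular matrices. -/
def upperB (K : Type) [Field K] (n : ℕ) : Set (Matrix (Fin n) (Fin n) K) :=
  {b | IsUnit b ∧ ∀ i j : Fin n, j < i → b i j = 0}

/-- The permutation matrix of `w`. -/
def permMat (K : Type) [Field K] {n : ℕ} (w : Equiv.Perm (Fin n)) :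
    Matrix (Fin n) (Fin n) K :=
  Matrix.of fun i j => if w j = i then 1 else 0

/-- The space `n₋` of strictly lower triangular matrices. -/
def lowerNil (K : Type) [Field K] (n : ℕ) : Set (Matrix (Fin n) (Fin n) K) :=
  {x | ∀ i j : Fin n, i ≤ j → x i j = 0}

/-- The Bruhat double coset `B ŵ B`. -/
def bruhatCell {K : Type} [Field K] {n : ℕ} (w : Equiv.Perm (Fin n)) :
    Set (Matrix (Fin n) (Fin n) K) :=
  {m | ∃ b₁ ∈ upperB K n, ∃ b₂ ∈ upperB K n, m = b₁ * permMat K w * b₂}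

/-- The affine part `Ω_w` of the Schubert variety of `w`. -/
def schubertAffine {K : Type} [Field K] {n : ℕ} (w : Equiv.Perm (Fin n)) :
    Set (Matrix (Fin n) (Fin n) K) :=
  {x ∈ lowerNil K n | (1 + x) ∈ zClosure (bruhatCell w)}

/-- The tangent cone `C_w` at the origin: the common zeroes in `n₋` of the lowest
forms of all nonzero polynomials in the vanishing ideal of `Ω_w`.  (A nonzero `f`
has a unique `d` such that all homogeneous components below `d` vanish while the
component in degree `d` is nonzero; that component is the lowest form `f₀`.) -/
def tangentCone {K : Type} [Field K] {n : ℕ} (w : Equiv.Perm (Fin n)) :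
    Set (Matrix (Fin n) (Fin n) K) :=
  {x ∈ lowerNil K n | ∀ f : MvPolynomial (Fin n × Fin n) K,
      (∀ s ∈ schubertAffine w, evalMat s f = 0) →
      ∀ d : ℕ, (∀ e < d, MvPolynomial.homogeneousComponent e f = 0) →
        MvPolynomial.homogeneousComponent d f ≠ 0 →
        evalMat x (MvPolynomial.homogeneousComponent d f) = 0}

lemma coeff_curve {K : Type} [Field K] {n : ℕ}
    (k : Fin n × Fin n → ℕ) (c : Fin n × Fin n → K) (x : Matrix (Fin n) (Fin n) K)
    (hk : ∀ p, 1 ≤ k p) (hcx : ∀ p, k p = 1 → c p = x p.1 p.2)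
    (hx0 : ∀ p, k p ≠ 1 → x p.1 p.2 = 0)
    (f : MvPolynomial (Fin n × Fin n) K) (d : ℕ)
    (hf : ∀ e < d, MvPolynomial.homogeneousComponent e f = 0) :
    (MvPolynomial.eval₂ (Polynomial.C (R := K))
        (fun p => Polynomial.C (c p) * Polynomial.X ^ (k p)) f).coeff d
      = evalMat x (MvPolynomial.homogeneousComponent d f) := by
  have hL : (MvPolynomial.eval₂ (Polynomial.C (R := K))
        (fun p => Polynomial.C (c p) * Polynomial.X ^ (k p)) f).coeff d
      = ∑ m ∈ f.support, if (∑ p ∈ m.support, k p * m p) = d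
          then MvPolynomial.coeff m f * ∏ p ∈ m.support, c p ^ m p else 0 := by
    conv_lhs => rw [f.as_sum, ← MvPolynomial.coe_eval₂Hom, map_sum]
    rw [Polynomial.finset_sum_coeff]
    refine Finset.sum_congr rfl fun m _ => ?_
    rw [MvPolynomial.coe_eval₂Hom, MvPolynomial.eval₂_monomial]
    have : (m.prod fun p e => (Polynomial.C (c p) * Polynomial.X ^ (k p)) ^ e)
        = Polynomial.C (∏ p ∈ m.support, c p ^ m p)
          * Polynomial.X ^ (∑ p ∈ m.support, k p * m p) := by
      rw [Finsupp.prod, ← Finset.prod_pow_eq_pow_sum, map_prod, ← Finset.prod_mul_distrib]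
      refine Finset.prod_congr rfl fun p _ => ?_
      rw [mul_pow, ← map_pow, ← pow_mul]
    rw [this, ← mul_assoc, ← Polynomial.C_mul, Polynomial.coeff_C_mul,
      Polynomial.coeff_X_pow]
    simp [eq_comm, mul_ite]
  rw [hL, evalMat, MvPolynomial.homogeneousComponent_apply, map_sum,
    Finset.sum_filter]
  refine Finset.sum_congr rfl fun m hm => ?_
  rw [MvPolynomial.eval_monomial]
  have hdeg : m.degree = ∑ p ∈ m.support, m p := rfl
  have hle : (∑ p ∈ m.support, m p) ≤ ∑ p ∈ m.support, k p * m p :=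
    Finset.sum_le_sum fun p _ => Nat.le_mul_of_pos_left _ (hk p)
  by_cases hW : (∑ p ∈ m.support, k p * m p) = d
  · by_cases hD : m.degree = d
    · rw [if_pos hW, if_pos hD]
      have heq : ∀ p ∈ m.support, m p = k p * m p :=
        (Finset.sum_eq_sum_iff_of_le fun p _ => Nat.le_mul_of_pos_left _ (hk p)).1
          (by rw [hW, ← hdeg, hD])
      rw [Finsupp.prod]
      refine congrArg _ (Finset.prod_congr rfl fun p hp => ?_)
      have hk1 : k p = 1 := by
        have hmp : m p ≠ 0 := Finsupp.mem_support_iff.1 hp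
        have := heq p hp
        nlinarith [Nat.one_le_iff_ne_zero.2 hmp, hk p]
      rw [hcx p hk1]
    · rw [if_pos hW, if_neg hD]
      have hlt : m.degree < d := lt_of_le_of_ne (by rw [hdeg]; omega) hD
      have : MvPolynomial.coeff m f = 0 := by
        have h0 := hf m.degree hlt
        have := MvPolynomial.coeff_homogeneousComponent (σ := Fin n × Fin n)
          (R := K) m.degree f m
        rw [h0, if_pos rfl] at this
        simpa using this.symm
      rw [this, zero_mul]
  · by_cases hD : m.degree = d
    · rw [if_neg hW, if_pos hD]
      obtain ⟨p, hp, hkp⟩ : ∃ p ∈ m.support, k p ≠ 1 := by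
        by_contra h
        push_neg at h
        apply hW
        rw [← hD, hdeg]
        exact (Finset.sum_congr rfl fun p hp => by rw [h p hp, one_mul]).symm
      rw [Finsupp.prod, Finset.prod_eq_zero hp, mul_zero]
      rw [hx0 p hkp]
      exact zero_pow (Finsupp.mem_support_iff.1 hp)
    · rw [if_neg hW, if_neg hD]

lemma eval_eval₂_poly {K : Type} [Field K] {n : ℕ} (N : Fin n × Fin n → Polynomial K)
    (f : MvPolynomial (Fin n × Fin n) K) (s : K) :
    Polynomial.eval s (MvPolynomial.eval₂ Polynomial.C N f)
      = evalMat (Matrix.of fun i j => (N (i, j)).eval s) f := by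
  rw [show Polynomial.eval s (MvPolynomial.eval₂ Polynomial.C N f)
      = (Polynomial.evalRingHom s) (MvPolynomial.eval₂ Polynomial.C N f) from rfl,
    MvPolynomial.eval₂_comp_left]
  rw [show (Polynomial.evalRingHom s).comp Polynomial.C = RingHom.id K from
    RingHom.ext fun a => by simp]
  rw [MvPolynomial.eval₂_id, evalMat]
  congr 1

lemma permMat1 {K : Type} [Field K] :
    permMat K (c[0, 1, 2] : Equiv.Perm (Fin 3)) = !![0,0,1;1,0,0;0,1,0] := by
  ext i j
  fin_cases i <;> fin_cases j <;>
    simp [permMat, Matrix.vecHead, Matrix.vecTail] <;> decide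

lemma permMat2 {K : Type} [Field K] :
    permMat K (c[0, 2, 1] : Equiv.Perm (Fin 3)) = !![0,1,0;0,0,1;1,0,0] := by
  ext i j
  fin_cases i <;> fin_cases j <;>
    simp [permMat, Matrix.vecHead, Matrix.vecTail] <;> decide

lemma mem_upperB {K : Type} [Field K] (b : Matrix (Fin 3) (Fin 3) K)
    (h10 : b 1 0 = 0) (h20 : b 2 0 = 0) (h21 : b 2 1 = 0)
    (hdet : b.det ≠ 0) : b ∈ upperB K 3 := by
  refine ⟨(Matrix.isUnit_iff_isUnit_det b).2 (isUnit_iff_ne_zero.2 hdet), ?_⟩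
  intro i j hij
  fin_cases i <;> fin_cases j <;> simp_all

lemma mem_cell1 {K : Type} [Field K] (p q : K) (hp : p ≠ 0) (hq : q ≠ 0) :
    (!![1,0,0; p,1,0; 0,q,1] : Matrix (Fin 3) (Fin 3) K)
      ∈ bruhatCell (c[0, 1, 2] : Equiv.Perm (Fin 3)) := by
  refine ⟨!![(p*q)⁻¹, 1, 0; 0, p, 1; 0, 0, q],
    mem_upperB _ (by simp) (by simp [Matrix.vecHead, Matrix.vecTail])
      (by simp [Matrix.vecHead, Matrix.vecTail]) ?_,
    !![1, 0, -(p*q)⁻¹; 0, 1, q⁻¹; 0, 0, 1],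
    mem_upperB _ (by simp) (by simp [Matrix.vecHead, Matrix.vecTail])
      (by simp [Matrix.vecHead, Matrix.vecTail]) ?_, ?_⟩
  · simp [Matrix.det_fin_three, Matrix.vecHead, Matrix.vecTail, hp, hq]
  · simp [Matrix.det_fin_three, Matrix.vecHead, Matrix.vecTail]
  · rw [permMat1]
    ext i j
    fin_cases i <;> fin_cases j
    all_goals simp [Matrix.mul_apply, Fin.sum_univ_three, Matrix.vecHead, Matrix.vecTail]
    all_goals try field_simp
    all_goals ring

lemma mem_cell2 {K : Type} [Field K] (p q : K) (hp : p ≠ 0) (hq : q ≠ 0) :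
    (!![1,0,0; p,1,0; p*q,q,1] : Matrix (Fin 3) (Fin 3) K)
      ∈ bruhatCell (c[0, 2, 1] : Equiv.Perm (Fin 3)) := by
  refine ⟨!![-p⁻¹, -(p*q)⁻¹, p⁻¹; 0, -q⁻¹, 1; 0, 0, q],
    mem_upperB _ (by simp) (by simp [Matrix.vecHead, Matrix.vecTail])
      (by simp [Matrix.vecHead, Matrix.vecTail]) ?_,
    !![p, 1, q⁻¹; 0, 1, 0; 0, 0, 1],
    mem_upperB _ (by simp) (by simp [Matrix.vecHead, Matrix.vecTail])
      (by simp [Matrix.vecHead, Matrix.vecTail]) ?_, ?_⟩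
  · simp [Matrix.det_fin_three, Matrix.vecHead, Matrix.vecTail, hp, hq]
  · simp [Matrix.det_fin_three, Matrix.vecHead, Matrix.vecTail, hp]
  · rw [permMat2]
    ext i j
    fin_cases i <;> fin_cases j
    all_goals simp [Matrix.mul_apply, Fin.sum_univ_three, Matrix.vecHead, Matrix.vecTail]
    all_goals try field_simp
    all_goals ring

lemma memZ1 {K : Type} [Field K] [CharZero K] (x : Matrix (Fin 3) (Fin 3) K)
    (hx : x ∈ lowerNil K 3) (h20 : x 2 0 = 0) :
    (1 + x) ∈ zClosure (bruhatCell (c[0, 1, 2] : Equiv.Perm (Fin 3))) := by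
  intro f hf
  set p := x 1 0 with hp
  set q := x 2 1 with hq
  set N : Fin 3 × Fin 3 → Polynomial K := fun pr =>
    (!![1, 0, 0; Polynomial.C p + Polynomial.X, 1, 0;
        0, Polynomial.C q + Polynomial.X, 1] :
      Matrix (Fin 3) (Fin 3) (Polynomial K)) pr.1 pr.2 with hN
  have key : ∀ s : K,
      (Matrix.of fun i j => ((N (i, j)).eval s)) = !![1,0,0; p+s,1,0; 0,q+s,1] := by
    intro s
    ext i j
    fin_cases i <;> fin_cases j <;>
      simp [hN, Matrix.vecHead, Matrix.vecTail]
  have hQ : MvPolynomial.eval₂ Polynomial.C N f = 0 := by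
    apply Polynomial.eq_zero_of_infinite_isRoot
    apply Set.Infinite.mono (s := ({-p, -q} : Set K)ᶜ)
    · intro s hs
      simp only [Set.mem_compl_iff, Set.mem_insert_iff, Set.mem_singleton_iff, not_or] at hs
      have hps : p + s ≠ 0 := fun h => hs.1 (eq_neg_of_add_eq_zero_right h)
      have hqs : q + s ≠ 0 := fun h => hs.2 (eq_neg_of_add_eq_zero_right h)
      show Polynomial.IsRoot _ s
      rw [Polynomial.IsRoot, eval_eval₂_poly, key s]
      exact hf _ (mem_cell1 _ _ hps hqs)
    · exact Set.Finite.infinite_compl (Set.toFinite _)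
  have h0 := eval_eval₂_poly N f 0
  rw [hQ, Polynomial.eval_zero, key 0] at h0
  have hmat : (!![1,0,0; p+0,1,0; 0,q+0,1] : Matrix (Fin 3) (Fin 3) K) = 1 + x := by
    ext i j
    fin_cases i <;> fin_cases j <;>
      simp [Matrix.one_apply, Matrix.vecHead, Matrix.vecTail,
        hx 0 0 (le_refl _), hx 0 1 (by decide), hx 0 2 (by decide),
        hx 1 1 (le_refl _), hx 1 2 (by decide), hx 2 2 (le_refl _), h20, ← hp, ← hq]
  rw [hmat] at h0
  exact h0.symm

lemma memZ2 {K : Type} [Field K] [CharZero K] (x : Matrix (Fin 3) (Fin 3) K)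
    (hx : x ∈ lowerNil K 3) (h20 : x 2 0 = x 1 0 * x 2 1) :
    (1 + x) ∈ zClosure (bruhatCell (c[0, 2, 1] : Equiv.Perm (Fin 3))) := by
  intro f hf
  set p := x 1 0 with hp
  set q := x 2 1 with hq
  set N : Fin 3 × Fin 3 → Polynomial K := fun pr =>
    (!![1, 0, 0; Polynomial.C p + Polynomial.X, 1, 0;
        (Polynomial.C p + Polynomial.X) * (Polynomial.C q + Polynomial.X),
        Polynomial.C q + Polynomial.X, 1] :
      Matrix (Fin 3) (Fin 3) (Polynomial K)) pr.1 pr.2 with hN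
  have key : ∀ s : K,
      (Matrix.of fun i j => ((N (i, j)).eval s))
        = !![1,0,0; p+s,1,0; (p+s)*(q+s),q+s,1] := by
    intro s
    ext i j
    fin_cases i <;> fin_cases j <;>
      simp [hN, Matrix.vecHead, Matrix.vecTail]
  have hQ : MvPolynomial.eval₂ Polynomial.C N f = 0 := by
    apply Polynomial.eq_zero_of_infinite_isRoot
    apply Set.Infinite.mono (s := ({-p, -q} : Set K)ᶜ)
    · intro s hs
      simp only [Set.mem_compl_iff, Set.mem_insert_iff, Set.mem_singleton_iff, not_or] at hs
      have hps : p + s ≠ 0 := fun h => hs.1 (eq_neg_of_add_eq_zero_right h)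
      have hqs : q + s ≠ 0 := fun h => hs.2 (eq_neg_of_add_eq_zero_right h)
      show Polynomial.IsRoot _ s
      rw [Polynomial.IsRoot, eval_eval₂_poly, key s]
      exact hf _ (mem_cell2 _ _ hps hqs)
    · exact Set.Finite.infinite_compl (Set.toFinite _)
  have h0 := eval_eval₂_poly N f 0
  rw [hQ, Polynomial.eval_zero, key 0] at h0
  have hmat : (!![1,0,0; p+0,1,0; (p+0)*(q+0),q+0,1] : Matrix (Fin 3) (Fin 3) K) = 1 + x := by
    ext i j
    fin_cases i <;> fin_cases j <;>
      simp [Matrix.one_apply, Matrix.vecHead, Matrix.vecTail,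
        hx 0 0 (le_refl _), hx 0 1 (by decide), hx 0 2 (by decide),
        hx 1 1 (le_refl _), hx 1 2 (by decide), hx 2 2 (le_refl _), h20, ← hp, ← hq]
  rw [hmat] at h0
  exact h0.symm

lemma omega1_sub {K : Type} [Field K] (s : Matrix (Fin 3) (Fin 3) K)
    (hs : s ∈ schubertAffine (c[0, 1, 2] : Equiv.Perm (Fin 3))) : s 2 0 = 0 := by
  obtain ⟨hsl, hcl⟩ := hs
  have h := hcl (MvPolynomial.X (2, 0)) ?_
  · simpa [evalMat, Matrix.add_apply, Matrix.one_apply] using h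
  · rintro m ⟨b₁, ⟨hb₁u, hb₁⟩, b₂, ⟨hb₂u, hb₂⟩, rfl⟩
    have e1 : b₁ 2 0 = 0 := hb₁ 2 0 (by decide)
    have e2 : b₁ 2 1 = 0 := hb₁ 2 1 (by decide)
    have e3 : b₂ 1 0 = 0 := hb₂ 1 0 (by decide)
    have e4 : b₂ 2 0 = 0 := hb₂ 2 0 (by decide)
    show evalMat (b₁ * permMat K _ * b₂) _ = 0
    rw [permMat1]
    simp [evalMat, Matrix.mul_apply, Fin.sum_univ_three,
      Matrix.vecHead, Matrix.vecTail, e1, e2, e3, e4]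

lemma omega2_sub {K : Type} [Field K] (s : Matrix (Fin 3) (Fin 3) K)
    (hs : s ∈ schubertAffine (c[0, 2, 1] : Equiv.Perm (Fin 3))) :
    s 1 0 * s 2 1 - s 2 0 = 0 := by
  obtain ⟨hsl, hcl⟩ := hs
  have h := hcl (MvPolynomial.X (1, 0) * MvPolynomial.X (2, 1)
      - MvPolynomial.X (1, 1) * MvPolynomial.X (2, 0)) ?_
  · have h11 : s 1 1 = 0 := hsl 1 1 (le_refl _)
    simpa [evalMat, Matrix.add_apply, Matrix.one_apply, h11] using h
  · rintro m ⟨b₁, ⟨hb₁u, hb₁⟩, b₂, ⟨hb₂u, hb₂⟩, rfl⟩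
    have e1 : b₁ 1 0 = 0 := hb₁ 1 0 (by decide)
    have e2 : b₁ 2 0 = 0 := hb₁ 2 0 (by decide)
    have e3 : b₁ 2 1 = 0 := hb₁ 2 1 (by decide)
    have e4 : b₂ 1 0 = 0 := hb₂ 1 0 (by decide)
    have e5 : b₂ 2 0 = 0 := hb₂ 2 0 (by decide)
    have e6 : b₂ 2 1 = 0 := hb₂ 2 1 (by decide)
    show evalMat (b₁ * permMat K _ * b₂) _ = 0
    rw [permMat2]
    simp [evalMat, Matrix.mul_apply, Fin.sum_univ_three,
      Matrix.vecHead, Matrix.vecTail, e1, e2, e3, e4, e5, e6]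
    ring

/-- For `n = 3` and both 3-cycles `w = (123)` and `w = (132)` of `S₃`, the tangent
cone `C_w` equals `{x ∈ n₋ : x₃₁ = 0}` (indices here are 0-based). -/
theorem tangentCone_A2_threeCycles {K : Type} [Field K] [IsAlgClosed K] [CharZero K]
    (w : Equiv.Perm (Fin 3)) (hw : w = c[0, 1, 2] ∨ w = c[0, 2, 1]) :
    tangentCone (K := K) w = {x ∈ lowerNil K 3 | x 2 0 = 0} := by
  ext x
  constructor
  · rintro ⟨hxl, hmain⟩
    refine ⟨hxl, ?_⟩
    rcases hw with rfl | rfl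
    · have hhom : MvPolynomial.homogeneousComponent 1 (MvPolynomial.X (R := K) ((2 : Fin 3), (0 : Fin 3)))
          = MvPolynomial.X (2, 0) := by
        rw [MvPolynomial.homogeneousComponent_of_mem
          ((MvPolynomial.mem_homogeneousSubmodule _ _).2 (MvPolynomial.isHomogeneous_X _ _))]
        simp
      have h := hmain (MvPolynomial.X (2, 0))
        (fun s hs => by simpa [evalMat] using omega1_sub s hs) 1
        (by
          intro e he
          interval_cases e
          simp [MvPolynomial.homogeneousComponent_zero])
        (by rw [hhom]; exact MvPolynomial.X_ne_zero _)
      rw [hhom] at h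
      simpa [evalMat] using h
    · set f : MvPolynomial (Fin 3 × Fin 3) K :=
        MvPolynomial.X (1, 0) * MvPolynomial.X (2, 1) - MvPolynomial.X (2, 0) with hfdef
      have hmem2 : MvPolynomial.X (R := K) ((1 : Fin 3), (0 : Fin 3)) * MvPolynomial.X (2, 1)
          ∈ homogeneousSubmodule (Fin 3 × Fin 3) K 2 :=
        (MvPolynomial.mem_homogeneousSubmodule _ _).2
          ((MvPolynomial.isHomogeneous_X _ _).mul (MvPolynomial.isHomogeneous_X _ _))
      have hmem1 : MvPolynomial.X (R := K) ((2 : Fin 3), (0 : Fin 3))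
          ∈ homogeneousSubmodule (Fin 3 × Fin 3) K 1 :=
        (MvPolynomial.mem_homogeneousSubmodule _ _).2 (MvPolynomial.isHomogeneous_X _ _)
      have hhom : MvPolynomial.homogeneousComponent 1 f = - MvPolynomial.X (2, 0) := by
        rw [hfdef, map_sub, MvPolynomial.homogeneousComponent_of_mem hmem2,
          MvPolynomial.homogeneousComponent_of_mem hmem1]
        simp
      have h := hmain f
        (fun s hs => by
          have := omega2_sub s hs
          simpa [hfdef, evalMat] using this) 1
        (by
          intro e he
          interval_cases e
          rw [map_sub, MvPolynomial.homogeneousComponent_of_mem hmem2,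
            MvPolynomial.homogeneousComponent_of_mem hmem1]
          simp)
        (by rw [hhom]; exact neg_ne_zero.2 (MvPolynomial.X_ne_zero _))
      rw [hhom] at h
      have : -(x 2 0) = 0 := by simpa [evalMat] using h
      exact neg_eq_zero.1 this
  · rintro ⟨hxl, h20⟩
    refine ⟨hxl, ?_⟩
    intro f hf d hlow _
    rcases hw with rfl | rfl
    · have hco := coeff_curve (fun _ => 1) (fun pr => x pr.1 pr.2) x (fun _ => le_refl 1)
        (fun _ _ => rfl) (fun _ h => absurd rfl h) f d hlow
      rw [← hco]
      have hQ0 : MvPolynomial.eval₂ (Polynomial.C (R := K))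
          (fun pr => Polynomial.C (x pr.1 pr.2) * Polynomial.X ^ 1) f = 0 := by
        apply Polynomial.zero_of_eval_zero
        intro t
        rw [eval_eval₂_poly]
        apply hf
        have hMl : (Matrix.of fun i j =>
            Polynomial.eval t (Polynomial.C (x i j) * Polynomial.X ^ 1)) ∈ lowerNil K 3 := by
          intro i j hij
          simp [hxl i j hij]
        refine ⟨hMl, ?_⟩
        apply memZ1 _ hMl
        simp [h20]
      rw [hQ0, Polynomial.coeff_zero]
    · set k : Fin 3 × Fin 3 → ℕ := fun pr => if pr = ((2 : Fin 3), (0 : Fin 3)) then 2 else 1 with hk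
      set c : Fin 3 × Fin 3 → K := fun pr =>
        if pr = ((2 : Fin 3), (0 : Fin 3)) then x 1 0 * x 2 1 else x pr.1 pr.2 with hc
      have hco := coeff_curve k c x
        (fun pr => by by_cases h : pr = ((2 : Fin 3), (0 : Fin 3)) <;> simp [hk, h])
        (fun pr hpr => by
          by_cases h : pr = ((2 : Fin 3), (0 : Fin 3))
          · simp [hk, h] at hpr
          · simp [hc, h])
        (fun pr hpr => by
          by_cases h : pr = ((2 : Fin 3), (0 : Fin 3))
          · rw [h]; exact h20
          · simp [hk, h] at hpr)
        f d hlow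
      rw [← hco]
      have hQ0 : MvPolynomial.eval₂ (Polynomial.C (R := K))
          (fun pr => Polynomial.C (c pr) * Polynomial.X ^ (k pr)) f = 0 := by
        apply Polynomial.zero_of_eval_zero
        intro t
        rw [eval_eval₂_poly]
        apply hf
        have hent : ∀ i j : Fin 3, (i, j) ≠ ((2 : Fin 3), (0 : Fin 3)) →
            Polynomial.eval t (Polynomial.C (c (i, j)) * Polynomial.X ^ (k (i, j)))
              = x i j * t := by
          intro i j h
          simp [hk, hc, h]
        have hMl : (Matrix.of fun i j =>
            Polynomial.eval t (Polynomial.C (c (i, j)) * Polynomial.X ^ (k (i, j))))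
            ∈ lowerNil K 3 := by
          intro i j hij
          have hne : (i, j) ≠ ((2 : Fin 3), (0 : Fin 3)) := by
            intro h
            rw [Prod.mk.injEq] at h
            rw [h.1, h.2] at hij
            exact absurd hij (by decide)
          simp only [Matrix.of_apply]
          rw [hent i j hne, hxl i j hij, zero_mul]
        refine ⟨hMl, ?_⟩
        apply memZ2 _ hMl
        have h1 : ((2 : Fin 3), (0 : Fin 3)) = ((2 : Fin 3), (0 : Fin 3)) := rfl
        simp only [Matrix.of_apply]
        rw [hent 1 0 (by decide), hent 2 1 (by decide)]
        simp [hk, hc]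
        ring
      rw [hQ0, Polynomial.coeff_zero]
end

section
/- Let n = 4 and let w = (14) be the transposition of S_4 exchanging 1 and 4. Then the tangent cone C_w of the Schubert variety of w at the origin equals {x ∈ n_- : x_{31} x_{42} − x_{32} x_{41} = 0}. -/
open Matrix MvPolynomial

/-! ### Auxiliary lemmas -/

lemma evalPoly_aeval {K : Type} [Field K] {σ : Type*} (c : σ → Polynomial K)
    (f : MvPolynomial σ K) (t : K) :
    (MvPolynomial.aeval c f).eval t = MvPolynomial.eval (fun i => (c i).eval t) f := by
  induction f using MvPolynomial.induction_on with
  | C a => simp [Polynomial.eval_C]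
  | add p q hp hq => simp [hp, hq]
  | mul_X p i hp => simp [hp]

lemma eval_smul_of_isHomogeneous {K : Type} [Field K] {σ : Type*}
    (f : MvPolynomial σ K) (n : ℕ) (hf : f.IsHomogeneous n) (s : K) (x : σ → K) :
    MvPolynomial.eval (fun i => s * x i) f = s ^ n * MvPolynomial.eval x f := by
  rw [eval_eq, eval_eq, Finset.mul_sum]
  apply Finset.sum_congr rfl
  intro d hd
  have hw := hf (MvPolynomial.mem_support_iff.mp hd)
  simp only [Finsupp.weight_apply, Pi.one_apply, smul_eq_mul, mul_one] at hw
  have h1 : ∀ i ∈ d.support, (s * x i) ^ d i = s ^ d i * x i ^ d i := fun i _ => mul_pow _ _ _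
  rw [Finset.prod_congr rfl h1, Finset.prod_mul_distrib, Finset.prod_pow_eq_pow_sum]
  have h2 : ∑ i ∈ d.support, d i = n := by rw [← hw]; rfl
  rw [h2]; ring

lemma permMat_swap {K : Type} [Field K] :
    permMat K (Equiv.swap (0 : Fin 4) 3) =
      !![0,0,0,1; 0,1,0,0; 0,0,1,0; 1,0,0,0] := by
  ext i j
  fin_cases i <;> fin_cases j <;>
    simp [permMat, Equiv.swap_apply_def, Matrix.cons_val_zero, Matrix.cons_val_one,
      Matrix.vecHead, Matrix.vecTail]

lemma cell_quadric {K : Type} [Field K] (m : Matrix (Fin 4) (Fin 4) K)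
    (hm : m ∈ bruhatCell (Equiv.swap (0 : Fin 4) 3)) :
    m 2 0 * m 3 1 - m 2 1 * m 3 0 = 0 := by
  obtain ⟨b₁, ⟨-, h₁⟩, b₂, ⟨-, h₂⟩, rfl⟩ := hm
  simp only [permMat_swap, Matrix.mul_apply, Fin.sum_univ_four]
  rw [h₁ 2 0 (by decide), h₁ 2 1 (by decide), h₁ 3 0 (by decide), h₁ 3 1 (by decide),
    h₁ 3 2 (by decide), h₂ 1 0 (by decide), h₂ 2 0 (by decide), h₂ 2 1 (by decide),
    h₂ 3 0 (by decide), h₂ 3 1 (by decide)]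
  norm_num [Matrix.cons_val_zero, Matrix.cons_val_one, Matrix.head_cons, Matrix.cons_val_two,
    Matrix.tail_cons, Matrix.cons_val_three]
  ring

lemma factor_aux {K : Type} [Field K] (a1 c2 x10 x32 A Bv D E iA iB iD iE : K)
    (hiA : A * iA = 1) (hiB : Bv * iB = 1) (hiD : D * iD = 1) (hiE : E * iE = 1)
    (hD : D = A - x32 * a1) (hE : E = Bv - c2 * x10) :
    (!![1,0,0,0; x10,1,0,0; a1*Bv, a1*c2,1,0; A*Bv, A*c2, x32,1] : Matrix (Fin 4) (Fin 4) K) =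
      !![-(iD*iE), -(c2*iB), -(x32*(iA*iB)), 1;
         0, E*iB, -(x32*x10*(iA*iB)), x10;
         0, 0, D*iA, a1*Bv;
         0, 0, 0, A*Bv] *
      !![0,0,0,1; 0,1,0,0; 0,0,1,0; 1,0,0,0] *
      !![1, c2*iB, x32*(iA*iB), iA*iB;
         0, 1, 0, -(x10*(iD*iE));
         0, 0, 1, -(a1*iD);
         0, 0, 0, 1] := by
  ext i j
  fin_cases i <;> fin_cases j <;>
    simp only [Matrix.mul_apply, Fin.sum_univ_four, Fin.zero_eta, Fin.mk_one, Fin.reduceFinMk,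
      Matrix.cons_val', Matrix.cons_val_zero, Matrix.cons_val_one, Matrix.head_cons,
      Matrix.head_fin_const, Matrix.empty_val', Matrix.cons_val_fin_one, Matrix.cons_val_two,
      Matrix.tail_cons, Matrix.cons_val_three, Matrix.of_apply]
  · ring
  · ring
  · ring
  · linear_combination (iB*iD) * hiE + (-(iB*iD*iE)) * hE + (-(iD*iE)) * hiB +
      (-(iB*iD)) * hiA + (-(iA*iB*iD)) * hD + (iA*iB) * hiD
  · ring
  · linear_combination (-iB) * hE + (-1 : K) * hiB
  · ring
  · linear_combination (x10*iB*iD) * hiE + (-(x10*iB*iD)) * hiA + (x10*iA*iB) * hiD +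
      (-(x10*iA*iB*iD)) * hD
  · ring
  · linear_combination (-(a1*c2)) * hiB
  · linear_combination (-(a1*x32*iA)) * hiB + (-iA) * hD + (-1 : K) * hiA
  · linear_combination (-(a1*iA)) * hiB + (a1*iA) * hiD
  · ring
  · linear_combination (-(c2*A)) * hiB
  · linear_combination (-(x32*Bv*iB)) * hiA + (-x32) * hiB
  · linear_combination (-(Bv*iB)) * hiA + (-1 : K) * hiB

/-- The key geometric fact: any strictly lower triangular `x` satisfying the quadric
gives `1 + x` in the Zariski closure of the Bruhat cell. -/
lemma mem_zClosure_of_quadric {K : Type} [Field K] [CharZero K]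
    (x : Matrix (Fin 4) (Fin 4) K) (hx : x ∈ lowerNil K 4)
    (hq : x 2 0 * x 3 1 - x 2 1 * x 3 0 = 0) :
    (1 + x) ∈ zClosure (bruhatCell (Equiv.swap (0 : Fin 4) 3)) := by
  -- outer product decomposition of the rank ≤ 1 block
  obtain ⟨a1, a2, c1, c2, h20, h21, h30, h31⟩ :
      ∃ a1 a2 c1 c2 : K, x 2 0 = a1 * c1 ∧ x 2 1 = a1 * c2 ∧
        x 3 0 = a2 * c1 ∧ x 3 1 = a2 * c2 := by
    by_cases h20 : x 2 0 = 0
    · by_cases h21 : x 2 1 = 0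
      · exact ⟨0, 1, x 3 0, x 3 1, by simp [h20], by simp [h21], by ring, by ring⟩
      · have h30 : x 3 0 = 0 := by
          rw [h20, zero_mul, zero_sub, neg_eq_zero, mul_eq_zero] at hq
          exact hq.resolve_left h21
        exact ⟨x 2 1, x 3 1, 0, 1, by simp [h20], by ring, by simp [h30], by ring⟩
    · refine ⟨x 2 0, x 3 0, 1, x 2 1 / x 2 0, by ring, by field_simp, by ring, ?_⟩
      field_simp
      linear_combination hq
  intro f hf
  -- the polynomial curve
  set Mt : K → Matrix (Fin 4) (Fin 4) K := fun t =>
    !![1,0,0,0; x 1 0,1,0,0; a1*(c1+t), a1*c2,1,0;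
       (a2+t)*(c1+t), (a2+t)*c2, x 3 2,1] with hMtdef
  have hcell : ∀ t : K, t ≠ -a2 → t ≠ -c1 → t ≠ x 3 2 * a1 - a2 → t ≠ c2 * x 1 0 - c1 →
      Mt t ∈ bruhatCell (Equiv.swap (0 : Fin 4) 3) := by
    intro t ht1 ht2 ht3 ht4
    have hA0 : a2 + t ≠ 0 := fun h => ht1 (by linear_combination h)
    have hB0 : c1 + t ≠ 0 := fun h => ht2 (by linear_combination h)
    have hD0 : a2 + t - x 3 2 * a1 ≠ 0 := fun h => ht3 (by linear_combination h)
    have hE0 : c1 + t - c2 * x 1 0 ≠ 0 := fun h => ht4 (by linear_combination h)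
    have hfact := factor_aux a1 c2 (x 1 0) (x 3 2) (a2 + t) (c1 + t)
      (a2 + t - x 3 2 * a1) (c1 + t - c2 * x 1 0)
      (a2 + t)⁻¹ (c1 + t)⁻¹ (a2 + t - x 3 2 * a1)⁻¹ (c1 + t - c2 * x 1 0)⁻¹
      (mul_inv_cancel₀ hA0) (mul_inv_cancel₀ hB0) (mul_inv_cancel₀ hD0) (mul_inv_cancel₀ hE0)
      rfl rfl
    set B1 : Matrix (Fin 4) (Fin 4) K :=
      !![-((a2 + t - x 3 2 * a1)⁻¹*(c1 + t - c2 * x 1 0)⁻¹), -(c2*(c1 + t)⁻¹),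
           -(x 3 2*((a2 + t)⁻¹*(c1 + t)⁻¹)), 1;
         0, (c1 + t - c2 * x 1 0)*(c1 + t)⁻¹, -(x 3 2*x 1 0*((a2 + t)⁻¹*(c1 + t)⁻¹)), x 1 0;
         0, 0, (a2 + t - x 3 2 * a1)*(a2 + t)⁻¹, a1*(c1 + t);
         0, 0, 0, (a2 + t)*(c1 + t)] with hB1
    set B2 : Matrix (Fin 4) (Fin 4) K :=
      !![1, c2*(c1 + t)⁻¹, x 3 2*((a2 + t)⁻¹*(c1 + t)⁻¹), (a2 + t)⁻¹*(c1 + t)⁻¹;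
         0, 1, 0, -(x 1 0*((a2 + t - x 3 2 * a1)⁻¹*(c1 + t - c2 * x 1 0)⁻¹));
         0, 0, 1, -(a1*(a2 + t - x 3 2 * a1)⁻¹);
         0, 0, 0, 1] with hB2
    set Pl : Matrix (Fin 4) (Fin 4) K := !![0,0,0,1; 0,1,0,0; 0,0,1,0; 1,0,0,0] with hPl
    have hfact2 : Mt t = B1 * Pl * B2 := hfact
    have hdetM : (Mt t).det = 1 := by
      rw [hMtdef]
      simp [Matrix.det_succ_row_zero, Fin.sum_univ_succ]
    have hdet3 : B1.det * Pl.det * B2.det = 1 := by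
      rw [← Matrix.det_mul, ← Matrix.det_mul, ← hfact2, hdetM]
    have hPeq : permMat K (Equiv.swap (0 : Fin 4) 3) = Pl := permMat_swap
    refine ⟨B1, ⟨?_, ?_⟩, B2, ⟨?_, ?_⟩, by rw [hPeq]; exact hfact2⟩
    · rw [Matrix.isUnit_iff_isUnit_det]
      exact IsUnit.of_mul_eq_one (Pl.det * B2.det) (by rw [← mul_assoc]; exact hdet3)
    · intro i j hij
      rw [hB1]
      fin_cases i <;> fin_cases j <;>
        first
          | exact absurd hij (by decide)
          | simp only [Matrix.cons_val', Matrix.cons_val_zero, Matrix.cons_val_one,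
              Matrix.head_cons, Matrix.head_fin_const, Matrix.empty_val',
              Matrix.cons_val_fin_one, Matrix.cons_val_two, Matrix.tail_cons,
              Matrix.cons_val_three, Matrix.of_apply, Fin.zero_eta, Fin.mk_one, Fin.reduceFinMk]
    · rw [Matrix.isUnit_iff_isUnit_det]
      exact IsUnit.of_mul_eq_one (B1.det * Pl.det) (by rw [mul_comm]; exact hdet3)
    · intro i j hij
      rw [hB2]
      fin_cases i <;> fin_cases j <;>
        first
          | exact absurd hij (by decide)
          | simp only [Matrix.cons_val', Matrix.cons_val_zero, Matrix.cons_val_one,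
              Matrix.head_cons, Matrix.head_fin_const, Matrix.empty_val',
              Matrix.cons_val_fin_one, Matrix.cons_val_two, Matrix.tail_cons,
              Matrix.cons_val_three, Matrix.of_apply, Fin.zero_eta, Fin.mk_one, Fin.reduceFinMk]
  -- the polynomial in t
  set cM : Matrix (Fin 4) (Fin 4) (Polynomial K) :=
    !![1,0,0,0; Polynomial.C (x 1 0),1,0,0;
       Polynomial.C a1*(Polynomial.C c1+Polynomial.X), Polynomial.C (a1*c2),1,0;
       (Polynomial.C a2+Polynomial.X)*(Polynomial.C c1+Polynomial.X),
         (Polynomial.C a2+Polynomial.X)*Polynomial.C c2, Polynomial.C (x 3 2),1] with hcM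
  set g : Polynomial K := MvPolynomial.aeval (fun p : Fin 4 × Fin 4 => cM p.1 p.2) f with hg
  have hEval : ∀ t : K, g.eval t = evalMat (Mt t) f := by
    intro t
    rw [hg, evalPoly_aeval]
    unfold evalMat
    refine congrArg (fun v => MvPolynomial.eval v f) ?_
    funext p
    obtain ⟨i, j⟩ := p
    fin_cases i <;> fin_cases j <;> simp [hcM, hMtdef]
  have hgz : g = 0 := by
    apply Polynomial.eq_zero_of_infinite_isRoot
    have hsub : ({-a2, -c1, x 3 2 * a1 - a2, c2 * x 1 0 - c1} : Set K)ᶜ ⊆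
        {t | g.IsRoot t} := by
      intro t ht
      simp only [Set.mem_compl_iff, Set.mem_insert_iff, Set.mem_singleton_iff, not_or] at ht
      obtain ⟨ht1, ht2, ht3, ht4⟩ := ht
      have := hf (Mt t) (hcell t ht1 ht2 ht3 ht4)
      simpa [Polynomial.IsRoot, hEval t] using this
    exact Set.Infinite.mono hsub
      ((Set.toFinite ({-a2, -c1, x 3 2 * a1 - a2, c2 * x 1 0 - c1} : Set K)).infinite_compl)
  have hM0 : Mt 0 = 1 + x := by
    ext i j
    fin_cases i <;> fin_cases j <;>
      simp [hMtdef, Matrix.one_apply, hx 0 0 (by decide), hx 0 1 (by decide),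
        hx 0 2 (by decide), hx 0 3 (by decide), hx 1 1 (by decide), hx 1 2 (by decide),
        hx 1 3 (by decide), hx 2 2 (by decide), hx 2 3 (by decide), hx 3 3 (by decide),
        h20, h21, h30, h31]
  have := hEval 0
  rw [hgz, hM0] at this
  simpa using this.symm

/-- For `n = 4` and `w = (14)`, the tangent cone `C_w` equals
`{x ∈ n₋ : x₃₁ x₄₂ − x₃₂ x₄₁ = 0}` (indices here are 0-based). -/
theorem tangentCone_A3_swap14 {K : Type} [Field K] [IsAlgClosed K] [CharZero K] :
    tangentCone (K := K) (Equiv.swap (0 : Fin 4) 3) =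
      {x ∈ lowerNil K 4 | x 2 0 * x 3 1 - x 2 1 * x 3 0 = 0} := by

  ext x
  constructor
  · rintro ⟨hlow, hcone⟩
    refine ⟨hlow, ?_⟩
    set F : MvPolynomial (Fin 4 × Fin 4) K :=
      X ((2 : Fin 4), (0 : Fin 4)) * X ((3 : Fin 4), (1 : Fin 4)) -
        X ((2 : Fin 4), (1 : Fin 4)) * X ((3 : Fin 4), (0 : Fin 4)) with hF
    have hFeval : ∀ m : Matrix (Fin 4) (Fin 4) K,
        evalMat m F = m 2 0 * m 3 1 - m 2 1 * m 3 0 := by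
      intro m; simp [evalMat, hF]
    have hFmem : F ∈ homogeneousSubmodule (Fin 4 × Fin 4) K 2 := by
      apply Submodule.sub_mem <;>
        · rw [mem_homogeneousSubmodule]
          exact (isHomogeneous_X _ _).mul (isHomogeneous_X _ _)
    have hvan : ∀ s ∈ schubertAffine (Equiv.swap (0 : Fin 4) 3), evalMat s F = 0 := by
      rintro s ⟨hs1, hs2⟩
      have h1 : evalMat (1 + s) F = 0 := by
        apply hs2
        intro m hm
        rw [hFeval]
        exact cell_quadric m hm
      rw [hFeval] at h1 ⊢
      have e1 : (1 + s) 2 0 = s 2 0 := by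
        simp [Matrix.add_apply, Matrix.one_apply]
      have e2 : (1 + s) 3 1 = s 3 1 := by
        simp [Matrix.add_apply, Matrix.one_apply]
      have e3 : (1 + s) 2 1 = s 2 1 := by
        simp [Matrix.add_apply, Matrix.one_apply]
      have e4 : (1 + s) 3 0 = s 3 0 := by
        simp [Matrix.add_apply, Matrix.one_apply]
      rw [e1, e2, e3, e4] at h1
      exact h1
    have hcomp : ∀ e : ℕ, homogeneousComponent e F = if e = 2 then F else 0 := by
      intro e; exact homogeneousComponent_of_mem hFmem
    have hFne : F ≠ 0 := by
      intro h
      have : evalMat (Matrix.of fun i j : Fin 4 =>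
          if i = 2 ∧ j = 0 then (1 : K) else if i = 3 ∧ j = 1 then 1 else 0) F = 0 := by
        rw [h]; simp [evalMat]
      rw [hFeval] at this
      simp at this
    have key := hcone F hvan 2 (by
        intro e he
        rw [hcomp e, if_neg (by omega)]) (by
        rw [hcomp 2, if_pos rfl]; exact hFne)
    rw [hcomp 2, if_pos rfl, hFeval] at key
    exact key
  · rintro ⟨hlow, hquad⟩
    refine ⟨hlow, ?_⟩
    intro f hf d _ hdne
    -- every scalar multiple of x lies in the Schubert affine part
    have hmem : ∀ s : K, (s • x) ∈ schubertAffine (Equiv.swap (0 : Fin 4) 3) := by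
      intro s
      have hlow' : (s • x) ∈ lowerNil K 4 := by
        intro i j hij
        simp [Matrix.smul_apply, hlow i j hij]
      refine ⟨hlow', ?_⟩
      apply mem_zClosure_of_quadric _ hlow'
      simp only [Matrix.smul_apply, smul_eq_mul]
      linear_combination (s ^ 2) * hquad
    have hfs : ∀ s : K, MvPolynomial.eval (fun p : Fin 4 × Fin 4 => s * x p.1 p.2) f = 0 := by
      intro s
      have := hf (s • x) (hmem s)
      simpa [evalMat, Matrix.smul_apply, smul_eq_mul] using this
    by_cases hdN : f.totalDegree < d
    · exfalso; exact hdne (homogeneousComponent_eq_zero _ _ hdN)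
    push_neg at hdN
    set q : Polynomial K := ∑ e ∈ Finset.range (f.totalDegree + 1),
      Polynomial.C (evalMat x (homogeneousComponent e f)) * Polynomial.X ^ e with hqdef
    have hqs : ∀ s : K, q.eval s = 0 := by
      intro s
      rw [hqdef]
      simp only [Polynomial.eval_finset_sum, Polynomial.eval_mul, Polynomial.eval_C,
        Polynomial.eval_pow, Polynomial.eval_X]
      have : ∀ e ∈ Finset.range (f.totalDegree + 1),
          evalMat x (homogeneousComponent e f) * s ^ e =
          MvPolynomial.eval (fun p : Fin 4 × Fin 4 => s * x p.1 p.2)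
            (homogeneousComponent e f) := by
        intro e _
        rw [eval_smul_of_isHomogeneous _ e (homogeneousComponent_isHomogeneous e f)]
        simp [evalMat]; ring
      rw [Finset.sum_congr rfl this, ← map_sum, sum_homogeneousComponent]
      exact hfs s
    have hq0 : q = 0 := Polynomial.funext (fun r => by rw [hqs r]; simp)
    have := congrArg (fun p => Polynomial.coeff p d) hq0
    simp only [hqdef, Polynomial.finset_sum_coeff, Polynomial.coeff_C_mul,
      Polynomial.coeff_X_pow, Polynomial.coeff_zero, mul_ite, mul_one, mul_zero] at this
    rw [Finset.sum_ite_eq (Finset.range (f.totalDegree + 1)) d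
      (fun e => evalMat x (homogeneousComponent e f)),
      if_pos (Finset.mem_range.mpr (by omega))] at this
    exact this
end

section
/- Let n = 4 and let w = (13)(24) be the permutation of S_4 exchanging 1 with 3 and 2 with 4. Then the tangent cone C_w of the Schubert variety of w at the origin equals {x ∈ n_- : x_{41} = 0 and x_{43} x_{31} + x_{42} x_{21} = 0}. -/
open Matrix MvPolynomial

local notation "w4" => (Equiv.swap (0 : Fin 4) 2 * Equiv.swap (1 : Fin 4) 3)

lemma permMat_w4 {K : Type} [Field K] :
    permMat K w4 = !![0,0,1,0; 0,0,0,1; 1,0,0,0; 0,1,0,0] := by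
  have h : ∀ j : Fin 4, (Equiv.swap (0 : Fin 4) 2 * Equiv.swap (1 : Fin 4) 3) j = ![2,3,0,1] j := by
    decide
  ext i j
  fin_cases i <;> fin_cases j <;>
    simp [permMat, h, Matrix.vecHead, Matrix.vecTail, Function.comp]

lemma cell_entry30 {K : Type} [Field K] {m : Matrix (Fin 4) (Fin 4) K}
    (hm : m ∈ bruhatCell (K := K) w4) : m 3 0 = 0 := by
  obtain ⟨b₁, ⟨-, h₁⟩, b₂, ⟨-, h₂⟩, rfl⟩ := hm
  simp [Matrix.mul_apply, permMat_w4, Fin.sum_univ_four,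
    h₁ 3 0 (by decide), h₁ 3 1 (by decide), h₁ 3 2 (by decide),
    h₂ 1 0 (by decide), h₂ 2 0 (by decide), h₂ 3 0 (by decide)]

lemma cell_det {K : Type} [Field K] {m : Matrix (Fin 4) (Fin 4) K}
    (hm : m ∈ bruhatCell (K := K) w4) :
    m 1 0 * (m 2 1 * m 3 2 - m 2 2 * m 3 1)
      - m 1 1 * (m 2 0 * m 3 2 - m 2 2 * m 3 0)
      + m 1 2 * (m 2 0 * m 3 1 - m 2 1 * m 3 0) = 0 := by
  obtain ⟨b₁, ⟨-, h₁⟩, b₂, ⟨-, h₂⟩, rfl⟩ := hm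
  simp only [Matrix.mul_apply, permMat_w4, Fin.sum_univ_four]
  simp [h₁ 1 0 (by decide), h₁ 2 0 (by decide), h₁ 2 1 (by decide),
    h₁ 3 0 (by decide), h₁ 3 1 (by decide), h₁ 3 2 (by decide),
    h₂ 1 0 (by decide), h₂ 2 0 (by decide), h₂ 2 1 (by decide),
    h₂ 3 0 (by decide), h₂ 3 1 (by decide), h₂ 3 2 (by decide)]
  ring

def Gmat {K : Type} [Field K] (p q r c s : K) : Matrix (Fin 4) (Fin 4) K :=
  !![1,0,0,0; p*r,1,0,0; p*s,c,1,0; 0, q*(r*c-s), q*r, 1]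

set_option maxHeartbeats 1600000 in
lemma Gmat_mem_cell {K : Type} [Field K] (p q r c s : K)
    (hp : p ≠ 0) (hq : q ≠ 0) (hs : s ≠ 0) (hrc : r*c - s ≠ 0) :
    Gmat p q r c s ∈ bruhatCell (K := K) w4 := by
  have hα : p*(r*c-s) ≠ 0 := mul_ne_zero hp hrc
  have hβ : q*s ≠ 0 := mul_ne_zero hq hs
  have hb : p*s ≠ 0 := mul_ne_zero hp hs
  have hd : q*(r*c-s) ≠ 0 := mul_ne_zero hq hrc
  set α : K := p*(r*c-s) with hαdef
  set β : K := q*s with hβdef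
  refine ⟨!![α⁻¹, c/(α*β), (q*(r*c-s))/(α*β), -(c/(α*β));
             0, β⁻¹, (q*r)/β, -β⁻¹; 0,0,1,0; 0,0,0,1], ⟨?_, ?_⟩,
          !![p*s, c, 1, 0; 0, q*(r*c-s), q*r, 1; 0,0,1,0; 0,0,0,1], ⟨?_, ?_⟩, ?_⟩
  · -- IsUnit b₁
    have hmul : (!![α⁻¹, c/(α*β), (q*(r*c-s))/(α*β), -(c/(α*β));
             0, β⁻¹, (q*r)/β, -β⁻¹; 0,0,1,0; 0,0,0,1] :
             Matrix (Fin 4) (Fin 4) K) *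
      !![α, -c, 1, 0; 0, β, -(q*r), 1; 0,0,1,0; 0,0,0,1] = 1 := by
      ext i j
      fin_cases i <;> fin_cases j <;>
        (try simp [Matrix.mul_apply, Fin.sum_univ_four, Matrix.one_apply,
          Matrix.vecHead, Matrix.vecTail]) <;> (try field_simp) <;> (try ring)
    exact (Units.mk _ _ hmul (mul_eq_one_comm.mp hmul)).isUnit
  · intro i j h
    fin_cases i <;> fin_cases j <;>
      first | (exact absurd h (by decide))
            | simp [Matrix.vecHead, Matrix.vecTail]
  · -- IsUnit b₂
    have hcr : c * r - s ≠ 0 := by rw [mul_comm]; exact hrc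
    have hmul : (!![p*s, c, 1, 0; 0, q*(r*c-s), q*r, 1; 0,0,1,0; 0,0,0,1] :
             Matrix (Fin 4) (Fin 4) K) *
      !![(p*s)⁻¹, -(c/((p*s)*(q*(r*c-s)))), (c*(q*r)-(q*(r*c-s)))/((p*s)*(q*(r*c-s))), c/((p*s)*(q*(r*c-s)));
         0, (q*(r*c-s))⁻¹, -((q*r)/(q*(r*c-s))), -((q*(r*c-s))⁻¹); 0,0,1,0; 0,0,0,1] = 1 := by
      ext i j
      fin_cases i <;> fin_cases j <;>
        (try simp [Matrix.mul_apply, Fin.sum_univ_four, Matrix.one_apply,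
          Matrix.vecHead, Matrix.vecTail]) <;> (try field_simp) <;> (try ring)
    exact (Units.mk _ _ hmul (mul_eq_one_comm.mp hmul)).isUnit
  · intro i j h
    fin_cases i <;> fin_cases j <;>
      first | (exact absurd h (by decide))
            | simp [Matrix.vecHead, Matrix.vecTail]
  · -- factorization
    have h1 : (!![α⁻¹, c/(α*β), (q*(r*c-s))/(α*β), -(c/(α*β));
             0, β⁻¹, (q*r)/β, -β⁻¹; 0,0,1,0; 0,0,0,1] :
             Matrix (Fin 4) (Fin 4) K) *
        !![α, -c, 1, 0; 0, β, -(q*r), 1; 0,0,1,0; 0,0,0,1] = 1 := by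
      ext i j
      fin_cases i <;> fin_cases j <;>
        (try simp [Matrix.mul_apply, Fin.sum_univ_four, Matrix.one_apply,
          Matrix.vecHead, Matrix.vecTail]) <;> (try field_simp) <;> (try ring)
    have h2 : (!![α, -c, 1, 0; 0, β, -(q*r), 1; 0,0,1,0; 0,0,0,1] :
             Matrix (Fin 4) (Fin 4) K) * Gmat p q r c s =
        permMat K w4 * !![p*s, c, 1, 0; 0, q*(r*c-s), q*r, 1; 0,0,1,0; 0,0,0,1] := by
      ext i j
      rw [permMat_w4]
      fin_cases i <;> fin_cases j <;>
        (try simp [Gmat, Matrix.mul_apply, Fin.sum_univ_four, hαdef, hβdef,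
          Matrix.vecHead, Matrix.vecTail]) <;> (try ring)
    rw [Matrix.mul_assoc, ← h2, ← Matrix.mul_assoc, h1, Matrix.one_mul]

lemma eval_aeval' {K : Type} [CommSemiring K] {σ τ : Type*}
    (Φ : σ → MvPolynomial τ K) (v : τ → K) (f : MvPolynomial σ K) :
    eval v (aeval Φ f) = eval (fun s => eval v (Φ s)) f := by
  induction f using MvPolynomial.induction_on with
  | C a => simp
  | add p q hp hq => rw [map_add, map_add, map_add, hp, hq]
  | mul_X p v' hp => rw [_root_.map_mul, _root_.map_mul, _root_.map_mul, hp, aeval_X, eval_X]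

lemma polyeval_aeval' {K : Type} [CommSemiring K] {σ : Type*}
    (Φ : σ → Polynomial K) (t : K) (f : MvPolynomial σ K) :
    Polynomial.eval t (aeval Φ f) = eval (fun s => Polynomial.eval t (Φ s)) f := by
  induction f using MvPolynomial.induction_on with
  | C a => simp
  | add p q hp hq => rw [map_add, Polynomial.eval_add, map_add, hp, hq]
  | mul_X p v' hp => rw [_root_.map_mul, Polynomial.eval_mul, _root_.map_mul, hp, aeval_X, eval_X]

lemma aeval_homog {K : Type} [CommSemiring K] {σ : Type*} {g : MvPolynomial σ K} {i : ℕ}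
    (hg : g.IsHomogeneous i) (Ψ : σ → Polynomial K) :
    aeval (fun v => Ψ v * Polynomial.X) g = aeval Ψ g * Polynomial.X ^ i := by
  conv_lhs => rw [g.as_sum]
  conv_rhs => rw [g.as_sum]
  rw [map_sum, map_sum, Finset.sum_mul]
  apply Finset.sum_congr rfl
  intro m hm
  rw [aeval_monomial, aeval_monomial]
  have hprod : (m.prod fun v k => (Ψ v * Polynomial.X) ^ k) =
      (m.prod fun v k => Ψ v ^ k) * (m.prod fun v k => Polynomial.X ^ k) := by
    rw [← Finsupp.prod_mul]
    apply Finsupp.prod_congr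
    intro v _
    rw [mul_pow]
  have hX : (m.prod fun v k => (Polynomial.X : Polynomial K) ^ k) =
      Polynomial.X ^ i := by
    rw [Finsupp.prod]
    rw [Finset.prod_pow_eq_pow_sum]
    congr 1
    have := hg (mem_support_iff.mp hm)
    simpa [Finsupp.weight, Finsupp.degree, Finsupp.linearCombination, Finsupp.sum] using this
  rw [hprod, hX, mul_assoc]

/-- entries of the generic matrix as polynomials in 5 variables p q r c s -/
noncomputable def Gpoly (K : Type) [Field K] : Matrix (Fin 4) (Fin 4) (MvPolynomial (Fin 5) K) :=
  !![1,0,0,0; X 0 * X 2,1,0,0; X 0 * X 4, X 3, 1, 0;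
     0, X 1*(X 2 * X 3 - X 4), X 1 * X 2, 1]

lemma eval_Gpoly {K : Type} [Field K] (v : Fin 5 → K) (i j : Fin 4) :
    eval v (Gpoly K i j) = Gmat (v 0) (v 1) (v 2) (v 3) (v 4) i j := by
  fin_cases i <;> fin_cases j <;>
    simp [Gpoly, Gmat, Matrix.vecHead, Matrix.vecTail]

theorem mem_zClosure_of_eq {K : Type} [Field K] [CharZero K]
    (a b c d e : K) (hF : a*c*e = a*d + b*e) :
    (!![1,0,0,0; a,1,0,0; b,c,1,0; 0,d,e,1] : Matrix (Fin 4) (Fin 4) K)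
      ∈ zClosure (bruhatCell (K := K) w4) := by
  intro f hf
  -- the pulled-back polynomial is identically zero
  have hH : (aeval (fun ij : Fin 4 × Fin 4 => Gpoly K ij.1 ij.2) f) *
      (X 0 * X 1 * X 4 * (X 2 * X 3 - X 4)) = (0 : MvPolynomial (Fin 5) K) := by
    have hQne : (X 0 * X 1 * X 4 * (X 2 * X 3 - X 4) : MvPolynomial (Fin 5) K) ≠ 0 := by
      intro h0
      have := congrArg (eval (![1,1,0,0,1] : Fin 5 → K)) h0
      simp [Matrix.vecHead, Matrix.vecTail] at this
    have : ∀ v : Fin 5 → K,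
        eval v ((aeval (fun ij : Fin 4 × Fin 4 => Gpoly K ij.1 ij.2) f) *
          (X 0 * X 1 * X 4 * (X 2 * X 3 - X 4))) = eval v 0 := by
      intro v
      rw [_root_.map_mul]
      rcases eq_or_ne (eval v (X 0 * X 1 * X 4 * (X 2 * X 3 - X 4) : MvPolynomial (Fin 5) K)) 0 with h | h
      · rw [h, mul_zero, map_zero]
      · have hfac : v 0 ≠ 0 ∧ v 1 ≠ 0 ∧ v 4 ≠ 0 ∧ v 2 * v 3 - v 4 ≠ 0 := by
          simp only [_root_.map_mul, map_sub, eval_X, ne_eq, mul_eq_zero] at h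
          push_neg at h
          exact ⟨h.1.1.1, h.1.1.2, h.1.2, by simpa using h.2⟩
        have hmem := Gmat_mem_cell (v 0) (v 1) (v 2) (v 3) (v 4)
          hfac.1 hfac.2.1 hfac.2.2.1 hfac.2.2.2
        have h0 : evalMat (Gmat (v 0) (v 1) (v 2) (v 3) (v 4)) f = 0 := hf _ hmem
        rw [eval_aeval']
        have hfun : (fun ij : Fin 4 × Fin 4 => eval v (Gpoly K ij.1 ij.2)) =
            (fun ij : Fin 4 × Fin 4 => Gmat (v 0) (v 1) (v 2) (v 3) (v 4) ij.1 ij.2) := by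
          funext ij; exact eval_Gpoly v ij.1 ij.2
        rw [hfun]
        rw [show (eval (fun ij : Fin 4 × Fin 4 => Gmat (v 0) (v 1) (v 2) (v 3) (v 4) ij.1 ij.2) f) =
          evalMat (Gmat (v 0) (v 1) (v 2) (v 3) (v 4)) f from rfl, h0, zero_mul, map_zero]
    exact MvPolynomial.funext this
  have hHzero : (aeval (fun ij : Fin 4 × Fin 4 => Gpoly K ij.1 ij.2) f) = 0 := by
    rcases mul_eq_zero.mp hH with h | h
    · exact h
    · exfalso
      apply (by
        intro h0
        have := congrArg (eval (![1,1,0,0,1] : Fin 5 → K)) h0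
        simp [Matrix.vecHead, Matrix.vecTail] at this :
          (X 0 * X 1 * X 4 * (X 2 * X 3 - X 4) : MvPolynomial (Fin 5) K) ≠ 0) h
  -- find parameters hitting (a,b,c,d,e)
  obtain ⟨p, q, r, c', s, h1, h2, h3, h4, h5⟩ :
      ∃ p q r c' s : K, p*r = a ∧ p*s = b ∧ c' = c ∧ q*(r*c' - s) = d ∧ q*r = e := by
    rcases eq_or_ne a 0 with ha | ha
    · rcases eq_or_ne e 0 with he | he
      · exact ⟨b, -d, 0, c, 1, by simp [ha], by simp, rfl, by ring, by simp [he]⟩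
      · have hb : b = 0 := by
          have : b * e = 0 := by rw [ha] at hF; linear_combination -hF
          rcases mul_eq_zero.mp this with h | h
          · exact h
          · exact absurd h he
        refine ⟨0, e, 1, c, c - d/e, by simp [ha], by simp [hb], rfl, ?_, by simp⟩
        field_simp
        ring
    · refine ⟨a, e, 1, c, b/a, by simp [ha], by field_simp, rfl, ?_, by simp⟩
      field_simp
      linear_combination hF
  have hmat : (!![1,0,0,0; a,1,0,0; b,c,1,0; 0,d,e,1] : Matrix (Fin 4) (Fin 4) K) =
      Gmat p q r c' s := by
    rw [Gmat, h4, h1, h2, h5, h3]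
  rw [hmat]
  have := congrArg (eval (![p,q,r,c',s] : Fin 5 → K)) hHzero
  rw [eval_aeval'] at this
  have hfun : (fun ij : Fin 4 × Fin 4 => eval (![p,q,r,c',s] : Fin 5 → K) (Gpoly K ij.1 ij.2)) =
      (fun ij : Fin 4 × Fin 4 => Gmat p q r c' s ij.1 ij.2) := by
    funext ij
    rw [eval_Gpoly]
    norm_num [Matrix.vecHead, Matrix.vecTail]
    rfl
  rw [hfun] at this
  simpa [evalMat] using this

/-- sufficient condition for membership in the affine Schubert variety -/
lemma mem_schubertAffine_of {K : Type} [Field K] [CharZero K]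
    (x : Matrix (Fin 4) (Fin 4) K) (hlow : x ∈ lowerNil K 4) (h30 : x 3 0 = 0)
    (hF : x 1 0 * x 2 1 * x 3 2 = x 1 0 * x 3 1 + x 2 0 * x 3 2) :
    x ∈ schubertAffine (K := K) w4 := by
  refine ⟨hlow, ?_⟩
  have hm : (1 + x : Matrix (Fin 4) (Fin 4) K) =
      !![1,0,0,0; x 1 0,1,0,0; x 2 0, x 2 1,1,0; 0, x 3 1, x 3 2,1] := by
    ext i j
    have h1 : (1 + x) i j = (1 : Matrix (Fin 4) (Fin 4) K) i j + x i j := rfl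
    fin_cases i <;> fin_cases j <;>
      rw [h1] <;>
      simp [Matrix.one_apply, Matrix.vecHead, Matrix.vecTail,
        hlow 0 0 (by decide), hlow 0 1 (by decide), hlow 0 2 (by decide), hlow 0 3 (by decide),
        hlow 1 1 (by decide), hlow 1 2 (by decide), hlow 1 3 (by decide),
        hlow 2 2 (by decide), hlow 2 3 (by decide), hlow 3 3 (by decide), h30]
  rw [hm]
  exact mem_zClosure_of_eq _ _ _ _ _ (by linear_combination hF)

/-- necessary conditions -/
lemma schubertAffine_necc {K : Type} [Field K] {s : Matrix (Fin 4) (Fin 4) K}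
    (hs : s ∈ schubertAffine (K := K) w4) :
    s 3 0 = 0 ∧ s 1 0 * s 2 1 * s 3 2 = s 1 0 * s 3 1 + s 2 0 * s 3 2 := by
  obtain ⟨hlow, hcl⟩ := hs
  have h30 : s 3 0 = 0 := by
    have := hcl (X ((3 : Fin 4), (0 : Fin 4))) (by
      intro m hm
      simpa [evalMat] using cell_entry30 hm)
    simpa [evalMat, Matrix.one_apply] using this
  refine ⟨h30, ?_⟩
  have hdet := hcl
    (X ((1:Fin 4),(0:Fin 4)) * (X ((2:Fin 4),(1:Fin 4)) * X ((3:Fin 4),(2:Fin 4)) - X ((2:Fin 4),(2:Fin 4)) * X ((3:Fin 4),(1:Fin 4)))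
      - X ((1:Fin 4),(1:Fin 4)) * (X ((2:Fin 4),(0:Fin 4)) * X ((3:Fin 4),(2:Fin 4)) - X ((2:Fin 4),(2:Fin 4)) * X ((3:Fin 4),(0:Fin 4)))
      + X ((1:Fin 4),(2:Fin 4)) * (X ((2:Fin 4),(0:Fin 4)) * X ((3:Fin 4),(1:Fin 4)) - X ((2:Fin 4),(1:Fin 4)) * X ((3:Fin 4),(0:Fin 4))))
    (by
      intro m hm
      simpa [evalMat] using cell_det hm)
  simp only [evalMat, map_add, map_sub, _root_.map_mul, eval_X] at hdet
  have e10 : (1 + s) 1 0 = s 1 0 := by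
    simp [Matrix.add_apply, Matrix.one_apply]
  have e20 : (1 + s) 2 0 = s 2 0 := by simp [Matrix.add_apply, Matrix.one_apply]
  have e21 : (1 + s) 2 1 = s 2 1 := by simp [Matrix.add_apply, Matrix.one_apply]
  have e30 : (1 + s) 3 0 = s 3 0 := by simp [Matrix.add_apply, Matrix.one_apply]
  have e31 : (1 + s) 3 1 = s 3 1 := by simp [Matrix.add_apply, Matrix.one_apply]
  have e32 : (1 + s) 3 2 = s 3 2 := by simp [Matrix.add_apply, Matrix.one_apply]
  have e11 : (1 + s) 1 1 = 1 := by
    simp [Matrix.add_apply, Matrix.one_apply, hlow 1 1 (by decide)]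
  have e22 : (1 + s) 2 2 = 1 := by
    simp [Matrix.add_apply, Matrix.one_apply, hlow 2 2 (by decide)]
  have e12 : (1 + s) 1 2 = 0 := by
    simp [Matrix.add_apply, Matrix.one_apply, hlow 1 2 (by decide)]
  rw [e10, e20, e21, e30, e31, e32, e11, e22, e12, h30] at hdet
  linear_combination hdet

lemma eval_lowest {K : Type} [Field K] [CharZero K] {σ : Type*} (x z : σ → K)
    (f : MvPolynomial σ K)
    (h0 : ∀ t : K, eval (fun v => x v * t + z v * t^2) f = 0)
    (d : ℕ) (hlt : ∀ e < d, homogeneousComponent e f = 0)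
    (hne : homogeneousComponent d f ≠ 0) :
    eval x (homogeneousComponent d f) = 0 := by
  set Ψ : σ → Polynomial K := fun v => Polynomial.C (x v) + Polynomial.C (z v) * Polynomial.X with hΨ
  have hp0 : (aeval (fun v => Ψ v * Polynomial.X) f : Polynomial K) = 0 := by
    apply Polynomial.zero_of_eval_zero
    intro t
    rw [polyeval_aeval']
    have he : (fun s => Polynomial.eval t (Ψ s * Polynomial.X)) =
        fun v => x v * t + z v * t^2 := by
      funext v; simp [hΨ]; ring
    rw [he]; exact h0 t
  have hd_le : d ≤ f.totalDegree := by
    by_contra h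
    push_neg at h
    exact hne (homogeneousComponent_eq_zero _ f h)
  have hexp : (aeval (fun v => Ψ v * Polynomial.X) f : Polynomial K) =
      ∑ i ∈ Finset.range (f.totalDegree + 1),
        (aeval Ψ (homogeneousComponent i f)) * Polynomial.X ^ i := by
    conv_lhs => rw [← MvPolynomial.sum_homogeneousComponent f]
    rw [map_sum]
    exact Finset.sum_congr rfl fun i _ =>
      aeval_homog (homogeneousComponent_isHomogeneous i f) Ψ
  rw [hexp] at hp0
  have hcoeff := congrArg (fun p => Polynomial.coeff p d) hp0
  simp only [Polynomial.finset_sum_coeff, Polynomial.coeff_mul_X_pow',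
    Polynomial.coeff_zero] at hcoeff
  rw [Finset.sum_eq_single d] at hcoeff
  · simp only [le_refl, if_true, Nat.sub_self] at hcoeff
    rw [Polynomial.coeff_zero_eq_eval_zero, polyeval_aeval'] at hcoeff
    have he : (fun s => Polynomial.eval 0 (Ψ s)) = x := by
      funext v; simp [hΨ]
    rwa [he] at hcoeff
  · intro i _ hne'
    rcases lt_or_gt_of_ne hne' with hlt' | hgt
    · rw [hlt i hlt']
      simp
    · rw [if_neg (by omega)]
  · intro hd
    exact absurd (Finset.mem_range.mpr (by omega)) hd

/-- For `n = 4` and `w = (13)(24)`, the tangent cone `C_w` equals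
`{x ∈ n₋ : x₄₁ = 0 ∧ x₄₃ x₃₁ + x₄₂ x₂₁ = 0}` (indices here are 0-based). -/
theorem tangentCone_A3_13_24 {K : Type} [Field K] [IsAlgClosed K] [CharZero K] :
    tangentCone (K := K) (Equiv.swap (0 : Fin 4) 2 * Equiv.swap (1 : Fin 4) 3) =
      {x ∈ lowerNil K 4 | x 3 0 = 0 ∧ x 3 2 * x 2 0 + x 3 1 * x 1 0 = 0} := by
  ext x
  constructor
  · rintro ⟨hlow, himp⟩
    refine ⟨hlow, ?_, ?_⟩
    · -- x 3 0 = 0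
      have hvan : ∀ s ∈ schubertAffine (K := K) w4,
          evalMat s (X ((3:Fin 4),(0:Fin 4))) = 0 := by
        intro s hs
        simpa [evalMat] using (schubertAffine_necc hs).1
      have hc1 : homogeneousComponent 1 (X ((3:Fin 4),(0:Fin 4)) : MvPolynomial (Fin 4 × Fin 4) K)
          = X ((3:Fin 4),(0:Fin 4)) := by
        rw [homogeneousComponent_of_mem ((mem_homogeneousSubmodule _ _).mpr
          (isHomogeneous_X _ _))]
        simp
      have h := himp (X ((3:Fin 4),(0:Fin 4))) hvan 1 ?_ ?_
      · rw [hc1] at h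
        simpa [evalMat] using h
      · intro e he
        interval_cases e
        simp
      · rw [hc1]
        exact X_ne_zero _
    · -- quadric
      set qp : MvPolynomial (Fin 4 × Fin 4) K :=
        X ((1:Fin 4),(0:Fin 4)) * X ((3:Fin 4),(1:Fin 4)) +
        X ((2:Fin 4),(0:Fin 4)) * X ((3:Fin 4),(2:Fin 4)) with hqp
      set cp : MvPolynomial (Fin 4 × Fin 4) K :=
        X ((1:Fin 4),(0:Fin 4)) * X ((2:Fin 4),(1:Fin 4)) * X ((3:Fin 4),(2:Fin 4)) with hcp
      have hqph : qp.IsHomogeneous 2 :=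
        ((isHomogeneous_X _ _).mul (isHomogeneous_X _ _)).add
          ((isHomogeneous_X _ _).mul (isHomogeneous_X _ _))
      have hcph : cp.IsHomogeneous 3 :=
        ((isHomogeneous_X _ _).mul (isHomogeneous_X _ _)).mul (isHomogeneous_X _ _)
      have hvan : ∀ s ∈ schubertAffine (K := K) w4, evalMat s (qp - cp) = 0 := by
        intro s hs
        have h2 := (schubertAffine_necc hs).2
        simp only [evalMat, map_sub, map_add, _root_.map_mul, eval_X, hqp, hcp]
        linear_combination -h2
      have hcomp : ∀ e : ℕ, homogeneousComponent e (qp - cp) =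
          (if e = 2 then qp else 0) - (if e = 3 then cp else 0) := by
        intro e
        rw [map_sub,
          homogeneousComponent_of_mem ((mem_homogeneousSubmodule _ _).mpr hqph),
          homogeneousComponent_of_mem ((mem_homogeneousSubmodule _ _).mpr hcph)]
      have hcomp2 : homogeneousComponent 2 (qp - cp) = qp := by
        rw [hcomp 2, if_pos rfl, if_neg (by norm_num), sub_zero]
      have hqpne : qp ≠ 0 := by
        intro h0
        have := congrArg (eval (fun p : Fin 4 × Fin 4 =>
          if p = ((1:Fin 4),(0:Fin 4)) then (1:K) else if p = ((3:Fin 4),(1:Fin 4)) then 1 else 0)) h0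
        simp [hqp] at this
      have h := himp (qp - cp) hvan 2 ?_ ?_
      · rw [hcomp2] at h
        simp only [evalMat, map_add, _root_.map_mul, eval_X, hqp] at h
        linear_combination h
      · intro e he
        rw [hcomp e, if_neg (by omega), if_neg (by omega), sub_zero]
      · rw [hcomp2]
        exact hqpne
  · rintro ⟨hlow, h30, hq⟩
    refine ⟨hlow, ?_⟩
    intro f hf d hlt hne
    set z : Matrix (Fin 4) (Fin 4) K :=
      Matrix.of fun i j => if (i,j) = ((3:Fin 4),(1:Fin 4)) then x 2 1 * x 3 2 else 0 with hz
    have h0 : ∀ t : K, eval (fun v : Fin 4 × Fin 4 => x v.1 v.2 * t + z v.1 v.2 * t^2) f = 0 := by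
      intro t
      have hmem : (Matrix.of fun i j => x i j * t + z i j * t^2) ∈
          schubertAffine (K := K) w4 := by
        apply mem_schubertAffine_of
        · intro i j hij
          have hxz : z i j = 0 := by
            by_cases h : (i,j) = ((3:Fin 4),(1:Fin 4))
            · exfalso
              rw [Prod.mk.injEq] at h
              rw [h.1, h.2] at hij
              exact absurd hij (by decide)
            · rw [hz]
              simp only [Matrix.of_apply, if_neg h]
          simp [hlow i j hij, hxz]
        · have hz30 : z 3 0 = 0 := by simp [hz]
          simp [h30, hz30]
        · have e10 : z 1 0 = 0 := by simp [hz]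
          have e21 : z 2 1 = 0 := by simp [hz]
          have e32 : z 3 2 = 0 := by simp [hz]
          have e20 : z 2 0 = 0 := by simp [hz]
          have e31 : z 3 1 = x 2 1 * x 3 2 := by simp [hz]
          simp only [Matrix.of_apply, e10, e21, e32, e20, e31]
          linear_combination (-(t^2)) * hq
      have := hf _ hmem
      simpa [evalMat] using this
    exact eval_lowest _ _ f h0 d hlt hne
end

section
/- Let n = 4 and let w = (13)(24) ∈ S_4, with reduced decomposition w = (23)(12)(34)(23) into simple transpositions. Define F : K^4 → n_- by x_{21} = t_2, x_{31} = t_1 t_2, x_{41} = 0, x_{32} = t_1 + t_4, x_{42} = t_3 t_4, x_{43} = t_3. Then the affine part Ω_w of the Schubert variety of w equals the Zariski closure of the image of F. -/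
open Matrix MvPolynomial

/-! ### Auxiliary material -/

namespace SchubertA3Aux

/-- The permutation `(13)(24)` of the statement. -/
abbrev w4 : Equiv.Perm (Fin 4) := Equiv.swap (0 : Fin 4) 2 * Equiv.swap (1 : Fin 4) 3

variable {K : Type} [Field K]

/-- The image of the parametrization `F`. -/
def SImg (K : Type) [Field K] : Set (Matrix (Fin 4) (Fin 4) K) :=
  {m : Matrix (Fin 4) (Fin 4) K | ∃ t : Fin 4 → K,
    m = !![0, 0, 0, 0;
           t 1, 0, 0, 0;
           t 0 * t 1, t 0 + t 3, 0, 0;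
           0, t 2 * t 3, t 2, 0]}

lemma perm_eq : permMat K w4 = !![0,0,1,0; 0,0,0,1; 1,0,0,0; 0,1,0,0] := by
  ext i j
  fin_cases i <;> fin_cases j <;>
    simp [permMat, w4, Equiv.swap_apply_def, Matrix.vecHead, Matrix.vecTail]

lemma mem_upperB_of (b : Matrix (Fin 4) (Fin 4) K)
    (h : ∀ i j : Fin 4, j < i → b i j = 0)
    (hd : b 0 0 * b 1 1 * b 2 2 * b 3 3 ≠ 0) : b ∈ upperB K 4 := by
  refine ⟨?_, h⟩
  rw [Matrix.isUnit_iff_isUnit_det, Matrix.det_of_upperTriangular (fun i j hij => h i j hij),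
    Fin.prod_univ_four]
  exact isUnit_iff_ne_zero.mpr hd

set_option maxHeartbeats 1000000 in
lemma cell_mem (t₁ t₂ t₃ t₄ : K) (h1 : t₁ ≠ 0) (h2 : t₂ ≠ 0) (h3 : t₃ ≠ 0) (h4 : t₄ ≠ 0) :
    (!![1,0,0,0; t₂,1,0,0; t₁*t₂, t₁+t₄, 1, 0; 0, t₃*t₄, t₃, 1] : Matrix (Fin 4) (Fin 4) K)
      ∈ bruhatCell w4 := by
  refine ⟨!![1, (t₁+t₄)/(t₁*t₂*t₃*t₄), 1, 0;
             0, 1/(t₁*t₃), t₂, 1/(t₃*t₄);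
             0, 0, t₁*t₂, (t₁+t₄)/(t₃*t₄);
             0, 0, 0, 1], ?_,
          !![1, 0, -(1/(t₂*t₄)), -((t₁+t₄)/(t₁*t₂*t₃*t₄));
             0, t₃*t₄, t₃, 1;
             0, 0, 1/(t₂*t₄), 0;
             0, 0, 0, 1], ?_, ?_⟩
  · apply mem_upperB_of
    · intro i j hij
      fin_cases i <;> fin_cases j <;> first | rfl | exact absurd hij (by decide)
    · show (1:K) * (1/(t₁*t₃)) * (t₁*t₂) * 1 ≠ 0
      field_simp
      exact div_ne_zero h2 h3
  · apply mem_upperB_of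
    · intro i j hij
      fin_cases i <;> fin_cases j <;> first | rfl | exact absurd hij (by decide)
    · show (1:K) * (t₃*t₄) * (1/(t₂*t₄)) * 1 ≠ 0
      field_simp
      exact div_ne_zero h3 h2
  · rw [perm_eq]
    ext i j
    fin_cases i <;> fin_cases j <;>
      simp [Matrix.mul_apply, Fin.sum_univ_four, Matrix.vecHead, Matrix.vecTail] <;>
      field_simp <;> (try ring) <;> field_simp

lemma cell_vanish (g : Matrix (Fin 4) (Fin 4) K) (hg : g ∈ bruhatCell w4) :
    g 3 0 = 0 ∧
      g 1 0 * (g 2 1 * g 3 2 - g 2 2 * g 3 1) - g 1 1 * (g 2 0 * g 3 2 - g 2 2 * g 3 0)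
        + g 1 2 * (g 2 0 * g 3 1 - g 2 1 * g 3 0) = 0 := by
  obtain ⟨b₁, hb₁, b₂, hb₂, rfl⟩ := hg
  rw [perm_eq]
  have z₁ : ∀ i j : Fin 4, j < i → b₁ i j = 0 := hb₁.2
  have z₂ : ∀ i j : Fin 4, j < i → b₂ i j = 0 := hb₂.2
  simp only [Matrix.mul_apply, Fin.sum_univ_four,
    z₁ 1 0 (by decide), z₁ 2 0 (by decide), z₁ 2 1 (by decide),
    z₁ 3 0 (by decide), z₁ 3 1 (by decide), z₁ 3 2 (by decide),
    z₂ 1 0 (by decide), z₂ 2 0 (by decide), z₂ 2 1 (by decide),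
    z₂ 3 0 (by decide), z₂ 3 1 (by decide), z₂ 3 2 (by decide)]
  simp [Matrix.vecHead, Matrix.vecTail, Matrix.cons_val', Matrix.cons_val_succ', Fin.succ]
  ring

variable [CharZero K]

lemma curve_eval (f : MvPolynomial (Fin 4 × Fin 4) K)
    (ψ : Matrix (Fin 4) (Fin 4) (Polynomial K))
    (h : ∀ s : K, s ≠ 0 → evalMat (ψ.map (Polynomial.eval s)) f = 0) (s₀ : K) :
    evalMat (ψ.map (Polynomial.eval s₀)) f = 0 := by
  set P : Polynomial K := MvPolynomial.eval₂ Polynomial.C (fun p => ψ p.1 p.2) f with hP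
  have key : ∀ s : K, Polynomial.eval s P = evalMat (ψ.map (Polynomial.eval s)) f := by
    intro s
    have := MvPolynomial.eval₂_comp_left (Polynomial.evalRingHom s) Polynomial.C
      (fun p : Fin 4 × Fin 4 => ψ p.1 p.2) f
    simp only [Polynomial.coe_evalRingHom] at this
    rw [hP, this]
    have hid : (Polynomial.evalRingHom s).comp Polynomial.C = RingHom.id K := by
      ext x; simp
    rw [hid, MvPolynomial.eval₂_id]
    rfl
  have hP0 : P = 0 := by
    apply Polynomial.eq_zero_of_infinite_isRoot
    apply Set.Infinite.mono (s := {x : K | x ≠ 0})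
    · intro s hs
      simp only [Set.mem_setOf_eq, Polynomial.IsRoot]
      rw [key s]; exact h s hs
    · have h0 : ({0}ᶜ : Set K).Infinite := (Set.finite_singleton 0).infinite_compl
      convert h0 using 1
      ext x; simp
  rw [← key s₀, hP0, Polynomial.eval_zero]

lemma mem_S_a {a b c d e : K} (ha : a ≠ 0) (h : a*c*e = a*d + b*e) :
    (!![0,0,0,0; a,0,0,0; b,c,0,0; 0,d,e,0] : Matrix (Fin 4) (Fin 4) K) ∈ SImg K := by
  refine ⟨![b/a, a, e, c - b/a], ?_⟩
  ext i j
  fin_cases i <;> fin_cases j <;> simp [Matrix.vecHead, Matrix.vecTail] <;>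
    field_simp <;>
      first
        | linear_combination h
        | linear_combination (-2 : K) * h
        | linear_combination (2 : K) * h
        | linear_combination -h
        | ring

lemma mem_S_e {a b c d e : K} (he : e ≠ 0) (h : a*c*e = a*d + b*e) :
    (!![0,0,0,0; a,0,0,0; b,c,0,0; 0,d,e,0] : Matrix (Fin 4) (Fin 4) K) ∈ SImg K := by
  refine ⟨![c - d/e, a, e, d/e], ?_⟩
  ext i j
  fin_cases i <;> fin_cases j <;> simp [Matrix.vecHead, Matrix.vecTail] <;>
    field_simp <;>
      first
        | linear_combination h
        | linear_combination (-2 : K) * h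
        | linear_combination (2 : K) * h
        | linear_combination -h
        | ring

/-- Every strictly lower triangular matrix satisfying the two Schubert equations is in the
Zariski closure of the image of `F`. -/
lemma vanish_on_lower (f : MvPolynomial (Fin 4 × Fin 4) K)
    (hf : ∀ s ∈ SImg K, evalMat s f = 0) (a b c d e : K)
    (h : a*c*e = a*d + b*e) :
    evalMat (!![0,0,0,0; a,0,0,0; b,c,0,0; 0,d,e,0] : Matrix (Fin 4) (Fin 4) K) f = 0 := by
  by_cases he : e = 0
  · by_cases ha : a = 0
    · subst he ha
      by_cases hb : b = 0
      · subst hb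
        -- curve  s ↦ (s², c s² - d s, c, d, s)
        set ψ : Matrix (Fin 4) (Fin 4) (Polynomial K) :=
          !![0,0,0,0; Polynomial.X^2,0,0,0;
             Polynomial.C c * Polynomial.X^2 - Polynomial.C d * Polynomial.X, Polynomial.C c,0,0;
             0, Polynomial.C d, Polynomial.X,0] with hψ
        have hmap : ∀ s : K, ψ.map (Polynomial.eval s) =
            !![0,0,0,0; s^2,0,0,0; c*s^2 - d*s, c,0,0; 0,d,s,0] := by
          intro s
          ext i j
          fin_cases i <;> fin_cases j <;> simp [hψ, Matrix.vecHead, Matrix.vecTail] <;> (try ring)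
        have key := curve_eval f ψ (fun s hs => by
          rw [hmap s]
          exact hf _ (mem_S_e hs (by ring))) 0
        rw [hmap 0] at key
        convert key using 2 <;> norm_num
      · -- curve  s ↦ (b s, b (1 + c s), c, d, -(d s))
        set ψ : Matrix (Fin 4) (Fin 4) (Polynomial K) :=
          !![0,0,0,0; Polynomial.C b * Polynomial.X,0,0,0;
             Polynomial.C b * (1 + Polynomial.C c * Polynomial.X), Polynomial.C c,0,0;
             0, Polynomial.C d, -(Polynomial.C d * Polynomial.X),0] with hψ
        have hmap : ∀ s : K, ψ.map (Polynomial.eval s) =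
            !![0,0,0,0; b*s,0,0,0; b*(1 + c*s), c,0,0; 0,d,-(d*s),0] := by
          intro s
          ext i j
          fin_cases i <;> fin_cases j <;> simp [hψ, Matrix.vecHead, Matrix.vecTail] <;> (try ring)
        have key := curve_eval f ψ (fun s hs => by
          rw [hmap s]
          exact hf _ (mem_S_a (mul_ne_zero hb hs) (by ring))) 0
        rw [hmap 0] at key
        convert key using 2 <;> norm_num
    · exact hf _ (mem_S_a ha h)
  · exact hf _ (mem_S_e he h)

/-- Every matrix `1 + F(t)` is in the Zariski closure of the Bruhat cell. -/
lemma vanish_one_add (f : MvPolynomial (Fin 4 × Fin 4) K)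
    (hf : ∀ g ∈ bruhatCell (K := K) w4, evalMat g f = 0) :
    ∀ t₁ t₂ t₃ t₄ : K,
      evalMat (!![1,0,0,0; t₂,1,0,0; t₁*t₂, t₁+t₄, 1, 0; 0, t₃*t₄, t₃, 1] :
        Matrix (Fin 4) (Fin 4) K) f = 0 := by
  have s0 : ∀ t₁ t₂ t₃ t₄ : K, t₁ ≠ 0 → t₂ ≠ 0 → t₃ ≠ 0 → t₄ ≠ 0 →
      evalMat (!![1,0,0,0; t₂,1,0,0; t₁*t₂, t₁+t₄, 1, 0; 0, t₃*t₄, t₃, 1] :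
        Matrix (Fin 4) (Fin 4) K) f = 0 :=
    fun t₁ t₂ t₃ t₄ h1 h2 h3 h4 => hf _ (cell_mem t₁ t₂ t₃ t₄ h1 h2 h3 h4)
  -- eliminate the condition t₁ ≠ 0
  have s1 : ∀ t₁ t₂ t₃ t₄ : K, t₂ ≠ 0 → t₃ ≠ 0 → t₄ ≠ 0 →
      evalMat (!![1,0,0,0; t₂,1,0,0; t₁*t₂, t₁+t₄, 1, 0; 0, t₃*t₄, t₃, 1] :
        Matrix (Fin 4) (Fin 4) K) f = 0 := by
    intro t₁ t₂ t₃ t₄ h2 h3 h4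
    set ψ : Matrix (Fin 4) (Fin 4) (Polynomial K) :=
      !![1,0,0,0; Polynomial.C t₂,1,0,0;
         Polynomial.X * Polynomial.C t₂, Polynomial.X + Polynomial.C t₄,1,0;
         0, Polynomial.C (t₃*t₄), Polynomial.C t₃,1] with hψ
    have hmap : ∀ s : K, ψ.map (Polynomial.eval s) =
        !![1,0,0,0; t₂,1,0,0; s*t₂, s+t₄, 1, 0; 0, t₃*t₄, t₃, 1] := by
      intro s
      ext i j
      fin_cases i <;> fin_cases j <;> simp [hψ, Matrix.vecHead, Matrix.vecTail] <;> (try ring)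
    have key := curve_eval f ψ (fun s hs => by
      rw [hmap s]; exact s0 s t₂ t₃ t₄ hs h2 h3 h4) t₁
    rw [hmap t₁] at key
    exact key
  -- eliminate t₂ ≠ 0
  have s2 : ∀ t₁ t₂ t₃ t₄ : K, t₃ ≠ 0 → t₄ ≠ 0 →
      evalMat (!![1,0,0,0; t₂,1,0,0; t₁*t₂, t₁+t₄, 1, 0; 0, t₃*t₄, t₃, 1] :
        Matrix (Fin 4) (Fin 4) K) f = 0 := by
    intro t₁ t₂ t₃ t₄ h3 h4
    set ψ : Matrix (Fin 4) (Fin 4) (Polynomial K) :=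
      !![1,0,0,0; Polynomial.X,1,0,0;
         Polynomial.C t₁ * Polynomial.X, Polynomial.C (t₁+t₄),1,0;
         0, Polynomial.C (t₃*t₄), Polynomial.C t₃,1] with hψ
    have hmap : ∀ s : K, ψ.map (Polynomial.eval s) =
        !![1,0,0,0; s,1,0,0; t₁*s, t₁+t₄, 1, 0; 0, t₃*t₄, t₃, 1] := by
      intro s
      ext i j
      fin_cases i <;> fin_cases j <;> simp [hψ, Matrix.vecHead, Matrix.vecTail] <;> (try ring)
    have key := curve_eval f ψ (fun s hs => by
      rw [hmap s]
      exact s1 t₁ s t₃ t₄ hs h3 h4) t₂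
    rw [hmap t₂] at key
    exact key
  -- eliminate t₄ ≠ 0
  have s3 : ∀ t₁ t₂ t₃ t₄ : K, t₃ ≠ 0 →
      evalMat (!![1,0,0,0; t₂,1,0,0; t₁*t₂, t₁+t₄, 1, 0; 0, t₃*t₄, t₃, 1] :
        Matrix (Fin 4) (Fin 4) K) f = 0 := by
    intro t₁ t₂ t₃ t₄ h3
    set ψ : Matrix (Fin 4) (Fin 4) (Polynomial K) :=
      !![1,0,0,0; Polynomial.C t₂,1,0,0;
         Polynomial.C (t₁*t₂), Polynomial.C t₁ + Polynomial.X,1,0;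
         0, Polynomial.C t₃ * Polynomial.X, Polynomial.C t₃,1] with hψ
    have hmap : ∀ s : K, ψ.map (Polynomial.eval s) =
        !![1,0,0,0; t₂,1,0,0; t₁*t₂, t₁+s, 1, 0; 0, t₃*s, t₃, 1] := by
      intro s
      ext i j
      fin_cases i <;> fin_cases j <;> simp [hψ, Matrix.vecHead, Matrix.vecTail] <;> (try ring)
    have key := curve_eval f ψ (fun s hs => by
      rw [hmap s]; exact s2 t₁ t₂ t₃ s h3 hs) t₄
    rw [hmap t₄] at key
    exact key
  -- eliminate t₃ ≠ 0
  intro t₁ t₂ t₃ t₄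
  set ψ : Matrix (Fin 4) (Fin 4) (Polynomial K) :=
    !![1,0,0,0; Polynomial.C t₂,1,0,0;
       Polynomial.C (t₁*t₂), Polynomial.C (t₁+t₄),1,0;
       0, Polynomial.X * Polynomial.C t₄, Polynomial.X,1] with hψ
  have hmap : ∀ s : K, ψ.map (Polynomial.eval s) =
      !![1,0,0,0; t₂,1,0,0; t₁*t₂, t₁+t₄, 1, 0; 0, s*t₄, s, 1] := by
    intro s
    ext i j
    fin_cases i <;> fin_cases j <;> simp [hψ, Matrix.vecHead, Matrix.vecTail] <;> (try ring)
  have key := curve_eval f ψ (fun s hs => by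
    rw [hmap s]; exact s3 t₁ t₂ s t₄ hs) t₃
  rw [hmap t₃] at key
  exact key

lemma one_add_eq (A B C D E : K) :
    (1 : Matrix (Fin 4) (Fin 4) K) + !![0,0,0,0; A,0,0,0; B,C,0,0; 0,D,E,0]
      = !![1,0,0,0; A,1,0,0; B,C,1,0; 0,D,E,1] := by
  ext i j
  fin_cases i <;> fin_cases j <;>
    simp [Matrix.one_apply, Matrix.vecHead, Matrix.vecTail]

lemma eval_shift (f : MvPolynomial (Fin 4 × Fin 4) K) (y : Matrix (Fin 4) (Fin 4) K) :
    evalMat y (MvPolynomial.eval₂ MvPolynomial.C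
      (fun p : Fin 4 × Fin 4 =>
        MvPolynomial.C ((1 : Matrix (Fin 4) (Fin 4) K) p.1 p.2) + MvPolynomial.X p) f)
      = evalMat (1 + y) f := by
  show (MvPolynomial.eval fun p : Fin 4 × Fin 4 => y p.1 p.2) _ = _
  rw [MvPolynomial.eval₂_comp_left (MvPolynomial.eval fun p : Fin 4 × Fin 4 => y p.1 p.2)
    MvPolynomial.C _ f]
  have hid : (MvPolynomial.eval fun p : Fin 4 × Fin 4 => y p.1 p.2).comp
      (MvPolynomial.C (σ := Fin 4 × Fin 4)) = RingHom.id K := by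
    ext x; simp
  rw [hid, MvPolynomial.eval₂_id]
  have harg : (⇑(MvPolynomial.eval fun p : Fin 4 × Fin 4 => y p.1 p.2) ∘
      fun p : Fin 4 × Fin 4 =>
        MvPolynomial.C ((1 : Matrix (Fin 4) (Fin 4) K) p.1 p.2) + MvPolynomial.X p) =
      fun p : Fin 4 × Fin 4 => (1 + y) p.1 p.2 := by
    funext p
    simp [Matrix.add_apply]
  rw [harg]
  rfl

end SchubertA3Aux

open SchubertA3Aux in
/-- For `n = 4`, `w = (13)(24)` with reduced decomposition `(23)(12)(34)(23)`:
the affine part `Ω_w` equals the Zariski closure of the image of the map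
`F(t₁,t₂,t₃,t₄)` given by `x₂₁ = t₂`, `x₃₁ = t₁t₂`, `x₄₁ = 0`, `x₃₂ = t₁ + t₄`,
`x₄₂ = t₃t₄`, `x₄₃ = t₃` (here `t₁,…,t₄` are `t 0, …, t 3`). -/
theorem schubertAffine_eq_closure_image_A3_13_24
    {K : Type} [Field K] [IsAlgClosed K] [CharZero K] :
    schubertAffine (K := K) (Equiv.swap (0 : Fin 4) 2 * Equiv.swap (1 : Fin 4) 3) =
      zClosure {m : Matrix (Fin 4) (Fin 4) K | ∃ t : Fin 4 → K,
        m = !![0, 0, 0, 0;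
               t 1, 0, 0, 0;
               t 0 * t 1, t 0 + t 3, 0, 0;
               0, t 2 * t 3, t 2, 0]} := by
  show schubertAffine (K := K) w4 = zClosure (SImg K)
  ext x
  constructor
  · rintro ⟨hlow, hcl⟩
    intro f hf
    -- the two equations satisfied by points of the Schubert variety
    have h30 : x 3 0 = 0 := by
      have := hcl (MvPolynomial.X (3,0)) (fun g hg => by
        simpa [evalMat] using (cell_vanish g hg).1)
      simpa [evalMat, Matrix.add_apply, Matrix.one_apply] using this
    have hrel : x 1 0 * (x 2 1) * (x 3 2) = x 1 0 * x 3 1 + x 2 0 * x 3 2 := by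
      have := hcl
        (MvPolynomial.X (1,0) * (MvPolynomial.X (2,1) * MvPolynomial.X (3,2)
            - MvPolynomial.X (2,2) * MvPolynomial.X (3,1))
          - MvPolynomial.X (1,1) * (MvPolynomial.X (2,0) * MvPolynomial.X (3,2)
            - MvPolynomial.X (2,2) * MvPolynomial.X (3,0))
          + MvPolynomial.X (1,2) * (MvPolynomial.X (2,0) * MvPolynomial.X (3,1)
            - MvPolynomial.X (2,1) * MvPolynomial.X (3,0)))
        (fun g hg => by simpa [evalMat] using (cell_vanish g hg).2)
      have O : ∀ i j : Fin 4, i ≠ j → (1 + x) i j = x i j := fun i j h => by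
        rw [Matrix.add_apply, Matrix.one_apply_ne h, zero_add]
      have D : ∀ i : Fin 4, i ≤ i → (1 + x) i i = 1 := fun i h => by
        rw [Matrix.add_apply, Matrix.one_apply_eq, hlow i i h, add_zero]
      simp only [evalMat, map_add, map_sub, _root_.map_mul, MvPolynomial.eval_X] at this
      rw [O 1 0 (by decide), O 2 1 (by decide), O 3 2 (by decide), O 3 1 (by decide),
        O 2 0 (by decide), O 3 0 (by decide), O 1 2 (by decide),
        D 1 le_rfl, D 2 le_rfl, h30, hlow 1 2 (by decide)] at this
      linear_combination this
    have hx : x = !![0,0,0,0; x 1 0,0,0,0; x 2 0, x 2 1,0,0; 0, x 3 1, x 3 2, 0] := by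
      ext i j
      fin_cases i <;> fin_cases j <;>
        simp [Matrix.vecHead, Matrix.vecTail] <;>
        first
          | exact hlow _ _ (by decide)
          | exact h30
    rw [hx]
    exact vanish_on_lower f hf _ _ _ _ _ hrel
  · intro hx
    refine ⟨?_, ?_⟩
    · -- strictly lower triangular
      intro i j hij
      have hvan : ∀ s ∈ SImg K, evalMat s (MvPolynomial.X (i,j)) = 0 := by
        rintro s ⟨t, rfl⟩
        simp only [evalMat, MvPolynomial.eval_X]
        fin_cases i <;> fin_cases j <;>
          first
            | exact absurd hij (by decide)
            | simp [Matrix.vecHead, Matrix.vecTail]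
      have := hx _ hvan
      simpa [evalMat] using this
    · -- 1 + x is in the closure of the Bruhat cell
      intro f hf
      have hsub : ∀ s ∈ SImg K,
          evalMat s (MvPolynomial.eval₂ MvPolynomial.C
            (fun p : Fin 4 × Fin 4 =>
              MvPolynomial.C ((1 : Matrix (Fin 4) (Fin 4) K) p.1 p.2) + MvPolynomial.X p) f)
              = 0 := by
        rintro s ⟨t, rfl⟩
        rw [eval_shift]
        rw [one_add_eq]
        exact vanish_one_add f hf (t 0) (t 1) (t 2) (t 3)
      have := hx _ hsub
      rwa [eval_shift] at this
end
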